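/- arXiv:2309.02070 — 6 statements merged into one kernel-verified Lean document; each statement's English description precedes it below -/
import Mathlib

section
/- Let X be a median graph and let C_1, …, C_k be finitely many nonempty convex sets of vertices of X that pairwise intersect. Then the intersection C_1 ∩ … ∩ C_k is nonempty. -/
open SimpleGraph

/-- A graph is median if it is connected and any three vertices admit a unique median. -/
def MedianGraph {V : Type*} (X : SimpleGraph V) : Prop :=
  X.Connected ∧ ∀ x y z : V, ∃! m : V,
    X.dist x m + X.dist m y = X.dist x y ∧
    X.dist y m + X.dist m z = X.dist y z ∧
    X.dist x m + X.dist m z = X.dist x z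

/-- A set of vertices is convex if it contains every vertex on a geodesic between
two of its points. -/
def IsConvex {V : Type*} (X : SimpleGraph V) (S : Set V) : Prop :=
  ∀ x ∈ S, ∀ y ∈ S, ∀ w : V, X.dist x w + X.dist w y = X.dist x y → w ∈ S

/-- A halfspace is a nonempty proper convex subset with convex complement. -/
def IsHalfspace {V : Type*} (X : SimpleGraph V) (D : Set V) : Prop :=
  D.Nonempty ∧ D ≠ Set.univ ∧ IsConvex X D ∧ IsConvex X Dᶜ

/-- The hypercube graph `Q_n`: vertices are functions `Fin n → Bool`,
two being adjacent iff they differ at exactly one coordinate. -/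
def cubeGraph (n : ℕ) : SimpleGraph (Fin n → Bool) where
  Adj f g := ∃! i, f i ≠ g i
  symm := by
    constructor
    rintro f g ⟨i, hi, hu⟩
    exact ⟨i, hi.symm, fun j hj => hu j hj.symm⟩
  loopless := by
    constructor
    rintro f ⟨i, hi, -⟩
    exact hi rfl

/-!
A median of `x, y, z` lies on a geodesic between any two of them. So if `A ∩ B ∋ z`,
`B ∩ D ∋ x` and `A ∩ D ∋ y`, convexity puts the median of `x, y, z` in all three sets.
A purely set-theoretic induction, replacing `C₀, …, Cₖ` by `C₀ ∩ Cₖ, …, Cₖ₋₁ ∩ Cₖ`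
(pairwise intersecting by the case of three sets), extends this to finite families.
-/

section Helly

variable {V : Type*}

theorem iInter_nonempty_of_triple_helly (P : Set V → Prop)
    (hinter : ∀ A B, P A → P B → P (A ∩ B))
    (htriple : ∀ A B D, P A → P B → P D → (A ∩ B).Nonempty → (B ∩ D).Nonempty →
      (A ∩ D).Nonempty → (A ∩ B ∩ D).Nonempty) :
    ∀ {k : ℕ} (C : Fin (k + 1) → Set V), (∀ i, P (C i)) →
      (∀ i j, (C i ∩ C j).Nonempty) → (⋂ i, C i).Nonempty
  | 0, C, _, hpair => by
    simpa [Set.nonempty_def] using hpair 0 0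
  | k + 1, C, hP, hpair => by
    let D : Fin (k + 1) → Set V := fun i => C i.castSucc ∩ C (Fin.last (k + 1))
    have hD_pair : ∀ i j, (D i ∩ D j).Nonempty := fun i j => by
      obtain ⟨m, ⟨hi, hj⟩, hlast⟩ :=
        htriple _ _ _ (hP i.castSucc) (hP j.castSucc) (hP (Fin.last _))
          (hpair _ _) (hpair _ _) (hpair _ _)
      exact ⟨m, ⟨hi, hlast⟩, hj, hlast⟩
    obtain ⟨p, hp⟩ := iInter_nonempty_of_triple_helly P hinter htriple D
      (fun i => hinter _ _ (hP _) (hP _)) hD_pair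
    rw [Set.mem_iInter] at hp
    refine ⟨p, Set.mem_iInter.2 fun i => Fin.lastCases ?_ (fun j => ?_) i⟩
    · exact (hp 0).2
    · exact (hp j).1

variable (X : SimpleGraph V)

theorem IsConvex.inter {A B : Set V} (hA : IsConvex X A) (hB : IsConvex X B) :
    IsConvex X (A ∩ B) :=
  fun x hx y hy w hw => ⟨hA x hx.1 y hy.1 w hw, hB x hx.2 y hy.2 w hw⟩

theorem IsConvex.inter_inter_nonempty
    (hmedian : ∀ x y z : V, ∃ m : V,
      X.dist x m + X.dist m y = X.dist x y ∧
      X.dist y m + X.dist m z = X.dist y z ∧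
      X.dist x m + X.dist m z = X.dist x z)
    {A B D : Set V} (hA : IsConvex X A) (hB : IsConvex X B) (hD : IsConvex X D)
    (hAB : (A ∩ B).Nonempty) (hBD : (B ∩ D).Nonempty) (hAD : (A ∩ D).Nonempty) :
    (A ∩ B ∩ D).Nonempty := by
  obtain ⟨z, hzA, hzB⟩ := hAB
  obtain ⟨x, hxB, hxD⟩ := hBD
  obtain ⟨y, hyA, hyD⟩ := hAD
  obtain ⟨m, hxy, hyz, hxz⟩ := hmedian x y z
  exact ⟨m, ⟨hA y hyA z hzA m hyz, hB x hxB z hzB m hxz⟩, hD x hxD y hyD m hxy⟩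

end Helly

theorem helly_convex_sets_general {V : Type*} (X : SimpleGraph V) (hX : MedianGraph X)
    (k : ℕ) (C : Fin k → Set V)
    (hconv : ∀ i, IsConvex X (C i))
    (hpair : ∀ i j, (C i ∩ C j).Nonempty) :
    (⋂ i, C i).Nonempty := by
  cases k with
  | zero =>
    have := hX.1.nonempty
    simp
  | succ k =>
    exact iInter_nonempty_of_triple_helly (IsConvex X) (fun _ _ => IsConvex.inter X)
      (fun _ _ _ => IsConvex.inter_inter_nonempty X fun x y z => (hX.2 x y z).exists)
      C hconv hpair

/-- Helly property: finitely many pairwise-intersecting nonempty convex sets in a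
median graph have nonempty global intersection. -/
theorem helly_convex_sets {V : Type*} (X : SimpleGraph V) (hX : MedianGraph X)
    (k : ℕ) (C : Fin k → Set V)
    (hconv : ∀ i, IsConvex X (C i))
    (hne : ∀ i, (C i).Nonempty)
    (hpair : ∀ i j, (C i ∩ C j).Nonempty) :
    (⋂ i, C i).Nonempty :=
  helly_convex_sets_general X hX k C hconv hpair
end

section
/- Let X be a median graph and let x, y be vertices of X. Then the graph distance d(x,y) equals the cardinality of the set of halfspaces D of X with x ∈ D and y ∉ D. -/
open SimpleGraph

/-!
For an edge `ab`, every vertex of a median graph is one step farther from one end than from the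
other, so the vertices split into `W(a, b)` (closer to `a`) and `W(b, a)`. The set `W(a, b)` is
convex: otherwise a geodesic between two of its points would leave and re-enter it through edges
`uv` and `zr`, and the median of `u, r, b` would lie on both sides of `ab`. Thus `W(a, b)` is a
halfspace, and it is the only one containing `a` but not `b`. Along a geodesic from `x` to `y`,
each step `x x'` therefore adds exactly one separating halfspace, `W(x, x')`.
-/

namespace SimpleGraph

variable {V : Type*} {X : SimpleGraph V}

theorem Connected.exists_adj_dist_eq (hc : X.Connected) {x y : V} {k : ℕ}
    (h : X.dist x y = k + 1) : ∃ p, X.Adj x p ∧ X.dist p y = k := by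
  obtain ⟨w, hw⟩ := hc.exists_walk_length_eq_dist x y
  cases w with
  | nil => simp_all
  | @cons _ p _ hxp q =>
    have hq : X.dist p y ≤ k := by
      have := dist_le q
      simp only [Walk.length_cons] at hw
      omega
    have htri : X.dist x y ≤ X.dist x p + X.dist p y := hc.dist_triangle
    rw [dist_eq_one_iff_adj.mpr hxp] at htri
    exact ⟨p, hxp, by omega⟩

theorem Connected.exists_adj_of_notMem_of_mem (hc : X.Connected) {S : Set V} {p s : V}
    (hp : p ∉ S) (hs : s ∈ S) :
    ∃ u v, u ∉ S ∧ v ∈ S ∧ X.Adj u v ∧ X.dist p u + 1 + X.dist v s = X.dist p s := by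
  generalize hn : X.dist p s = n
  induction n generalizing p with
  | zero => exact absurd (hc.dist_eq_zero_iff.mp hn ▸ hs) hp
  | succ n ih =>
    obtain ⟨p', hpp', hp's⟩ := hc.exists_adj_dist_eq hn
    by_cases hp' : p' ∈ S
    · exact ⟨p, p', hp, hp', hpp', by rw [hp's, dist_self]; omega⟩
    obtain ⟨u, v, hu, hv, huv, hd⟩ := ih hp' hp's
    have h₁ : X.dist p u ≤ X.dist p p' + X.dist p' u := hc.dist_triangle
    have h₂ : X.dist p v ≤ X.dist p u + X.dist u v := hc.dist_triangle
    have h₃ : X.dist p s ≤ X.dist p v + X.dist v s := hc.dist_triangle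
    rw [dist_eq_one_iff_adj.mpr hpp'] at h₁
    rw [dist_eq_one_iff_adj.mpr huv] at h₂
    exact ⟨u, v, hu, hv, huv, by omega⟩

/-- `W(a, b)` in the literature on median graphs. -/
def nearSide (X : SimpleGraph V) (a b : V) : Set V := {v | X.dist v a < X.dist v b}

theorem Connected.mem_nearSide_of_dist_add (hc : X.Connected) {a b v w : V}
    (hv : v ∈ X.nearSide a b) (hw : X.dist v w + X.dist w a = X.dist v a) :
    w ∈ X.nearSide a b := by
  have : X.dist v b ≤ X.dist v w + X.dist w b := hc.dist_triangle
  simp only [nearSide, Set.mem_ofPred_eq] at hv ⊢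
  omega

end SimpleGraph

namespace MedianGraph

variable {V : Type*} {X : SimpleGraph V}

theorem dist_eq_add_one_or (hX : MedianGraph X) {a b : V} (hab : X.Adj a b) (v : V) :
    X.dist v b = X.dist v a + 1 ∨ X.dist v a = X.dist v b + 1 := by
  obtain ⟨m, ⟨hvab, ham, hvb⟩, -⟩ := hX.2 v a b
  rw [dist_eq_one_iff_adj.mpr hab] at ham
  rcases Nat.eq_zero_or_pos (X.dist a m) with h | h
  · obtain rfl := hX.1.dist_eq_zero_iff.mp h
    rw [dist_eq_one_iff_adj.mpr hab] at hvb
    exact .inl hvb.symm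
  · obtain rfl := hX.1.dist_eq_zero_iff.mp (by omega : X.dist m b = 0)
    rw [dist_eq_one_iff_adj.mpr hab.symm] at hvab
    exact .inr hvab.symm

theorem dist_eq_add_one_of_mem_nearSide (hX : MedianGraph X) {a b v : V} (hab : X.Adj a b)
    (hv : v ∈ X.nearSide a b) : X.dist v b = X.dist v a + 1 := by
  have : X.dist v a < X.dist v b := hv
  rcases hX.dist_eq_add_one_or hab v with h | h <;> omega

theorem compl_nearSide (hX : MedianGraph X) {a b : V} (hab : X.Adj a b) :
    (X.nearSide a b)ᶜ = X.nearSide b a := by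
  ext v
  simp only [nearSide, Set.mem_compl_iff, Set.mem_ofPred_eq, not_lt]
  rcases hX.dist_eq_add_one_or hab v with h | h <;> omega

/-- The median of `u, r, b` would be both the median of `u, r, a`, which lies in `W(a, b)`, and
the median of `v, z, b`, which lies in `W(b, a)`. -/
theorem dist_ne_add_two_of_crossing (hX : MedianGraph X) {a b u v z r : V} (hab : X.Adj a b)
    (hu : u ∈ X.nearSide a b) (hr : r ∈ X.nearSide a b)
    (hv : v ∈ X.nearSide b a) (hz : z ∈ X.nearSide b a)
    (huv : X.Adj u v) (hzr : X.Adj z r) : X.dist u r ≠ X.dist v z + 2 := by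
  intro hur
  have hc := hX.1
  have tri (p q s : V) : X.dist p q ≤ X.dist p s + X.dist s q := hc.dist_triangle
  have comm (p q : V) : X.dist p q = X.dist q p := dist_comm
  have hub := hX.dist_eq_add_one_of_mem_nearSide hab hu
  have hrb := hX.dist_eq_add_one_of_mem_nearSide hab hr
  have hva := hX.dist_eq_add_one_of_mem_nearSide hab.symm hv
  have hza := hX.dist_eq_add_one_of_mem_nearSide hab.symm hz
  have dab : X.dist a b = 1 := dist_eq_one_iff_adj.mpr hab
  have duv : X.dist u v = 1 := dist_eq_one_iff_adj.mpr huv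
  have dzr : X.dist z r = 1 := dist_eq_one_iff_adj.mpr hzr
  obtain ⟨c, ⟨hc₁, hc₂, hc₃⟩, -⟩ := hX.2 u r a
  obtain ⟨c', ⟨hc'₁, hc'₂, hc'₃⟩, -⟩ := hX.2 v z b
  have hcW : c ∈ X.nearSide a b := hc.mem_nearSide_of_dist_add hu hc₃
  have hc'W : c' ∈ X.nearSide b a := hc.mem_nearSide_of_dist_add hv hc'₃
  have hvb : X.dist v b = X.dist u a := by
    have := tri v a u; have := tri u b v; have := comm u v; omega
  have hzb : X.dist z b = X.dist r a := by
    have := tri z a r; have := tri r b z; have := comm z r; omega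
  have hmed : X.dist u c + X.dist c r = X.dist u r ∧ X.dist r c + X.dist c b = X.dist r b ∧
      X.dist u c + X.dist c b = X.dist u b := by
    have := tri c b a; have := tri u b c; have := tri r b c; have := comm a b
    have := comm c r; omega
  have hmed' : X.dist u c' + X.dist c' r = X.dist u r ∧ X.dist r c' + X.dist c' b = X.dist r b ∧
      X.dist u c' + X.dist c' b = X.dist u b := by
    have := tri u c' v; have := tri c' r z; have := tri u r c'
    have := tri r b c'; have := tri u b c'
    have := comm c' r; have := comm z c'; omega
  obtain rfl : c = c' := (hX.2 u r b).unique hmed hmed'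
  have : X.dist c a < X.dist c b := hcW
  have : X.dist c b < X.dist c a := hc'W
  omega

theorem isConvex_nearSide (hX : MedianGraph X) {a b : V} (hab : X.Adj a b) :
    IsConvex X (X.nearSide a b) := by
  intro p hp q hq s hs
  by_contra hsW
  have hc := hX.1
  obtain ⟨u, v, hu, hv, huv, hpv⟩ :=
    hc.exists_adj_of_notMem_of_mem (S := (X.nearSide a b)ᶜ) (not_not.mpr hp) hsW
  obtain ⟨r, z, hr, hz, hrz, hqz⟩ :=
    hc.exists_adj_of_notMem_of_mem (S := (X.nearSide a b)ᶜ) (not_not.mpr hq) hv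
  rw [Set.notMem_compl_iff] at hu hr
  rw [hX.compl_nearSide hab] at hv hz
  refine hX.dist_ne_add_two_of_crossing hab hu hr hv hz huv hrz.symm ?_
  have tri (p q s : V) : X.dist p q ≤ X.dist p s + X.dist s q := hc.dist_triangle
  have comm (p q : V) : X.dist p q = X.dist q p := dist_comm
  have duv : X.dist u v = 1 := dist_eq_one_iff_adj.mpr huv
  have dzr : X.dist z r = 1 := dist_eq_one_iff_adj.mpr hrz.symm
  have := tri u r z; have := tri u z v; have := tri p r u; have := tri p q r
  have := tri v q s; have := comm q r; have := comm z v; have := comm v q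
  omega

theorem isHalfspace_nearSide (hX : MedianGraph X) {a b : V} (hab : X.Adj a b) :
    IsHalfspace X (X.nearSide a b) := by
  have hab₁ : X.dist a b = 1 := dist_eq_one_iff_adj.mpr hab
  have hba : X.dist b a = 1 := dist_eq_one_iff_adj.mpr hab.symm
  refine ⟨⟨a, ?_⟩, fun h ↦ ?_, hX.isConvex_nearSide hab, ?_⟩
  · simp [nearSide, hab₁]
  · have : b ∈ X.nearSide a b := h ▸ Set.mem_univ b
    simp [nearSide, hba] at this
  · rw [hX.compl_nearSide hab]
    exact hX.isConvex_nearSide hab.symm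

theorem eq_nearSide_of_isConvex (hX : MedianGraph X) {D : Set V} (hD : IsConvex X D)
    (hDc : IsConvex X Dᶜ) {a b : V} (hab : X.Adj a b) (ha : a ∈ D) (hb : b ∉ D) :
    D = X.nearSide a b := by
  have hab₁ : X.dist a b = 1 := dist_eq_one_iff_adj.mpr hab
  have hba₁ : X.dist b a = 1 := dist_eq_one_iff_adj.mpr hab.symm
  ext v
  constructor
  · intro hv
    by_contra hvW
    rw [← Set.mem_compl_iff, hX.compl_nearSide hab] at hvW
    have hva := hX.dist_eq_add_one_of_mem_nearSide hab.symm hvW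
    exact hb (hD v hv a ha b (by omega))
  · intro hvW
    by_contra hv
    have hvb := hX.dist_eq_add_one_of_mem_nearSide hab hvW
    exact hDc v hv b hb a (by omega) ha

theorem separatingHalfspaces_eq_insert (hX : MedianGraph X) {x x' y : V} (hxx' : X.Adj x x')
    (hx'y : X.dist x y = X.dist x' y + 1) :
    {D : Set V | IsHalfspace X D ∧ x ∈ D ∧ y ∉ D} =
      insert (X.nearSide x x') {D : Set V | IsHalfspace X D ∧ x' ∈ D ∧ y ∉ D} := by
  have hxx'₁ : X.dist x x' = 1 := dist_eq_one_iff_adj.mpr hxx'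
  ext D
  simp only [Set.mem_ofPred_eq, Set.mem_insert_iff]
  constructor
  · rintro ⟨hD, hx, hy⟩
    by_cases hx' : x' ∈ D
    · exact .inr ⟨hD, hx', hy⟩
    · exact .inl (hX.eq_nearSide_of_isConvex hD.2.2.1 hD.2.2.2 hxx' hx hx')
  · rintro (rfl | ⟨hD, hx', hy⟩)
    · refine ⟨hX.isHalfspace_nearSide hxx', by simp [nearSide, hxx'₁], ?_⟩
      have : X.dist y x = X.dist y x' + 1 := by rw [SimpleGraph.dist_comm, hx'y, SimpleGraph.dist_comm]
      simp only [nearSide, Set.mem_ofPred_eq]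
      omega
    · refine ⟨hD, by_contra fun hx ↦ ?_, hy⟩
      exact hD.2.2.2 x hx y hy x' (by omega) hx'

theorem encard_separatingHalfspaces (hX : MedianGraph X) (x y : V) :
    {D : Set V | IsHalfspace X D ∧ x ∈ D ∧ y ∉ D}.encard = X.dist x y := by
  generalize hn : X.dist x y = n
  induction n generalizing x with
  | zero =>
    obtain rfl := hX.1.dist_eq_zero_iff.mp hn
    simp
  | succ n ih =>
    obtain ⟨x', hxx', hx'y⟩ := hX.1.exists_adj_dist_eq hn
    have hx' : x' ∉ X.nearSide x x' := by simp [nearSide]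
    rw [hX.separatingHalfspaces_eq_insert hxx' (by omega),
      Set.encard_insert_of_notMem fun h ↦ hx' h.2.1, ih x' hx'y]
    norm_cast

end MedianGraph

/-- In a median graph, the distance between two vertices equals the number of
halfspaces containing the first but not the second. -/
theorem dist_eq_card_separating_halfspaces {V : Type*} (X : SimpleGraph V)
    (hX : MedianGraph X) (x y : V) :
    X.dist x y = {D : Set V | IsHalfspace X D ∧ x ∈ D ∧ y ∉ D}.ncard := by
  rw [Set.ncard_def, hX.encard_separatingHalfspaces x y, ENat.toNat_natCast]
end

section
/- Let X be a median graph, v a vertex and a, b, c three pairwise distinct neighbours of v. Suppose each pair of the edges [v,a], [v,b], [v,c] spans a 4-cycle, i.e. for each pair among a, b, c there is a common neighbour of the two vertices distinct from v. Then the three edges span a 3-cube: there is a set of 8 vertices of X containing v, a, b, c whose induced subgraph is isomorphic to the hypercube graph Q_3, with v adjacent in this cube exactly to a, b, c. -/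
open SimpleGraph

/-! Median graphs are triangle-free, since the three median equations of a triangle add up to
an odd number, and contain no `K_{2,3}`, since two vertices with three common neighbours would
both be medians of those neighbours. Hence the far corners of the three squares at `v` are
distinct and pairwise at distance 2, and their median `u` closes up a homomorphic image of
`Q_3`. A homomorphism from `Q_3` into a median graph that separates vertices at Hamming
distance 2 is an induced embedding: an edge between images at Hamming distance 2 would close a
triangle, and an edge between images of antipodes would create a `K_{2,3}`. -/

theorem cubeGraph_adj_iff {n : ℕ} {p q : Fin n → Bool} :
    (cubeGraph n).Adj p q ↔ hammingDist p q = 1 := by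
  rw [hammingDist, Finset.card_eq_one]
  simp only [Finset.eq_singleton_iff_unique_mem, Finset.mem_filter, Finset.mem_univ, true_and]
  rfl

section CubeThree

variable {p q : Fin 3 → Bool}

theorem cubeGraph_three_exists_adj_adj (h : hammingDist p q = 2) :
    ∃ r, (cubeGraph 3).Adj p r ∧ (cubeGraph 3).Adj r q := by
  simp only [cubeGraph_adj_iff]
  revert p q
  decide

theorem cubeGraph_three_exists_of_hammingDist_eq_three (h : hammingDist p q = 3) :
    ∃ r s s', (cubeGraph 3).Adj p r ∧ (cubeGraph 3).Adj r s ∧ (cubeGraph 3).Adj r s' ∧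
      (cubeGraph 3).Adj s q ∧ (cubeGraph 3).Adj s' q ∧ hammingDist p s = 2 ∧
      hammingDist p s' = 2 ∧ hammingDist s s' = 2 ∧ hammingDist r q = 2 := by
  simp only [cubeGraph_adj_iff]
  revert p q
  decide

theorem cubeGraph_three_adj_origin_iff :
    (cubeGraph 3).Adj ![false, false, false] q ↔
      q = ![true, false, false] ∨ q = ![false, true, false] ∨ q = ![false, false, true] := by
  rw [cubeGraph_adj_iff]
  revert q
  decide

end CubeThree

namespace MedianGraph

variable {V : Type*} {X : SimpleGraph V} {x y z m : V}

theorem not_adj_of_adj_of_adj (hX : MedianGraph X) (hxy : X.Adj x y) (hyz : X.Adj y z) :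
    ¬X.Adj x z := by
  intro hxz
  obtain ⟨m, ⟨h₁, h₂, h₃⟩, -⟩ := hX.2 x y z
  rw [dist_eq_one_iff_adj.mpr hxy] at h₁
  rw [dist_eq_one_iff_adj.mpr hyz] at h₂
  rw [dist_eq_one_iff_adj.mpr hxz] at h₃
  rw [dist_comm (u := y)] at h₂
  omega

theorem dist_eq_two (hX : MedianGraph X) (hxy : x ≠ y) (hxm : X.Adj x m) (hmy : X.Adj m y) :
    X.dist x y = 2 := by
  have h₀ : X.dist x y ≠ 0 := fun h => hxy (hX.1.dist_eq_zero_iff.mp h)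
  have h₁ : X.dist x y ≠ 1 := fun h => hX.not_adj_of_adj_of_adj hxm hmy (dist_eq_one_iff_adj.mp h)
  have h₂ : X.dist x y ≤ 2 := dist_le (.cons hxm (.cons hmy .nil))
  omega

theorem exists_adj_of_dist_eq_two (hX : MedianGraph X) (hxy : X.dist x y = 2)
    (hyz : X.dist y z = 2) (hxz : X.dist x z = 2) :
    ∃ u, X.Adj x u ∧ X.Adj y u ∧ X.Adj z u := by
  obtain ⟨u, ⟨h₁, h₂, h₃⟩, -⟩ := hX.2 x y z
  refine ⟨u, ?_, ?_, ?_⟩ <;> rw [← dist_eq_one_iff_adj]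
  all_goals rw [dist_comm (u := u)] at *; omega

theorem eq_of_adj_of_adj_of_adj (hX : MedianGraph X) {p q r : V}
    (hpq : p ≠ q) (hpr : p ≠ r) (hqr : q ≠ r)
    (hxp : X.Adj x p) (hxq : X.Adj x q) (hxr : X.Adj x r)
    (hyp : X.Adj y p) (hyq : X.Adj y q) (hyr : X.Adj y r) : x = y := by
  have isMedian : ∀ m, X.Adj m p → X.Adj m q → X.Adj m r →
      X.dist p m + X.dist m q = X.dist p q ∧ X.dist q m + X.dist m r = X.dist q r ∧
        X.dist p m + X.dist m r = X.dist p r := by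
    intro m hp hq hr
    rw [hX.dist_eq_two hpq hp.symm hq, hX.dist_eq_two hqr hq.symm hr,
      hX.dist_eq_two hpr hp.symm hr, dist_comm (u := p), dist_comm (u := q),
      dist_eq_one_iff_adj.mpr hp, dist_eq_one_iff_adj.mpr hq, dist_eq_one_iff_adj.mpr hr]
    exact ⟨rfl, rfl, rfl⟩
  exact (hX.2 p q r).unique (isMedian x hxp hxq hxr) (isMedian y hyp hyq hyr)

theorem injective_of_hammingDist_eq_two (hX : MedianGraph X) (f : cubeGraph 3 →g X)
    (hf : ∀ p q, hammingDist p q = 2 → f p ≠ f q) : Function.Injective f := by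
  intro p q hpq
  by_contra hne
  have h₀ : hammingDist p q ≠ 0 := hammingDist_ne_zero.mpr hne
  have h₃ : hammingDist p q ≤ 3 := hammingDist_le_card_fintype.trans_eq (Fintype.card_fin 3)
  obtain h | h | h : hammingDist p q = 1 ∨ hammingDist p q = 2 ∨ hammingDist p q = 3 := by omega
  · exact (f.map_adj (cubeGraph_adj_iff.mpr h)).ne hpq
  · exact hf p q h hpq
  · obtain ⟨r, s, -, hpr, hrs, -, hsq, -⟩ := cubeGraph_three_exists_of_hammingDist_eq_three h
    exact hX.not_adj_of_adj_of_adj (f.map_adj hrs) (f.map_adj hsq) (hpq ▸ (f.map_adj hpr).symm)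

theorem cubeGraph_adj_of_adj (hX : MedianGraph X) (f : cubeGraph 3 →g X)
    (hf : ∀ p q, hammingDist p q = 2 → f p ≠ f q) {p q : Fin 3 → Bool}
    (hpq : X.Adj (f p) (f q)) : (cubeGraph 3).Adj p q := by
  have h₀ : hammingDist p q ≠ 0 := hammingDist_ne_zero.mpr fun h => hpq.ne (congrArg f h)
  have h₃ : hammingDist p q ≤ 3 := hammingDist_le_card_fintype.trans_eq (Fintype.card_fin 3)
  obtain h | h | h : hammingDist p q = 1 ∨ hammingDist p q = 2 ∨ hammingDist p q = 3 := by omega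
  · exact cubeGraph_adj_iff.mpr h
  · obtain ⟨r, hpr, hrq⟩ := cubeGraph_three_exists_adj_adj h
    exact absurd hpq (hX.not_adj_of_adj_of_adj (f.map_adj hpr) (f.map_adj hrq))
  · obtain ⟨r, s, s', hpr, hrs, hrs', hsq, hs'q, hps, hps', hss', hrq⟩ :=
      cubeGraph_three_exists_of_hammingDist_eq_three h
    exact absurd (hX.eq_of_adj_of_adj_of_adj (hf p s hps) (hf p s' hps') (hf s s' hss')
      (f.map_adj hpr).symm (f.map_adj hrs) (f.map_adj hrs') hpq.symm (f.map_adj hsq).symm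
      (f.map_adj hs'q).symm) (hf r q hrq)

def cubeEmbedding (hX : MedianGraph X) (f : cubeGraph 3 →g X)
    (hf : ∀ p q, hammingDist p q = 2 → f p ≠ f q) : cubeGraph 3 ↪g X where
  toFun := f
  inj' := hX.injective_of_hammingDist_eq_two f hf
  map_rel_iff' := ⟨hX.cubeGraph_adj_of_adj f hf, f.map_adj⟩

end MedianGraph

theorem exists_induce_iso_cubeGraph_three {V : Type*} {X : SimpleGraph V}
    (φ : cubeGraph 3 ↪g X) :
    ∃ S : Set V, φ ![false, false, false] ∈ S ∧ φ ![true, false, false] ∈ S ∧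
      φ ![false, true, false] ∈ S ∧ φ ![false, false, true] ∈ S ∧ S.ncard = 8 ∧
      Nonempty (X.induce S ≃g cubeGraph 3) ∧
      ∀ w ∈ S, (X.Adj (φ ![false, false, false]) w ↔
        w = φ ![true, false, false] ∨ w = φ ![false, true, false] ∨ w = φ ![false, false, true]) := by
  refine ⟨Set.range φ, ⟨_, rfl⟩, ⟨_, rfl⟩, ⟨_, rfl⟩, ⟨_, rfl⟩, ?_, ⟨φ.isoInduceRange.symm⟩, ?_⟩
  · rw [Set.ncard_range_of_injective φ.injective]
    simp
  · rintro _ ⟨p, rfl⟩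
    simp only [φ.map_adj_iff, φ.injective.eq_iff, cubeGraph_three_adj_origin_iff]

theorem exists_eq_vec_three {α : Type*} (p : Fin 3 → α) : ∃ x y z, p = ![x, y, z] :=
  ⟨p 0, p 1, p 2, by ext i; fin_cases i <;> rfl⟩

section CubeMap

variable {V : Type*} {X : SimpleGraph V} {v a b c wab wac wbc u : V}

variable (v a b c wab wac wbc u) in
def cubeMap (p : Fin 3 → Bool) : V :=
  match p 0, p 1, p 2 with
  | false, false, false => v
  | true, false, false => a
  | false, true, false => b
  | false, false, true => c
  | true, true, false => wab
  | true, false, true => wac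
  | false, true, true => wbc
  | true, true, true => u

def cubeMapHom (hva : X.Adj v a) (hvb : X.Adj v b) (hvc : X.Adj v c)
    (hawab : X.Adj a wab) (hbwab : X.Adj b wab) (hawac : X.Adj a wac) (hcwac : X.Adj c wac)
    (hbwbc : X.Adj b wbc) (hcwbc : X.Adj c wbc)
    (hwabu : X.Adj wab u) (hwacu : X.Adj wac u) (hwbcu : X.Adj wbc u) : cubeGraph 3 →g X where
  toFun := cubeMap v a b c wab wac wbc u
  map_rel' {p q} h := by
    rw [cubeGraph_adj_iff] at h
    obtain ⟨x, y, z, rfl⟩ := exists_eq_vec_three p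
    obtain ⟨x', y', z', rfl⟩ := exists_eq_vec_three q
    cases x <;> cases y <;> cases z <;> cases x' <;> cases y' <;> cases z' <;>
      first | exact absurd h (by decide) | assumption | exact X.adj_symm ‹_›

theorem cubeMap_ne_of_hammingDist_eq_two (hab : a ≠ b) (hac : a ≠ c) (hbc : b ≠ c)
    (hvwab : v ≠ wab) (hvwac : v ≠ wac) (hvwbc : v ≠ wbc)
    (hwabwac : wab ≠ wac) (hwabwbc : wab ≠ wbc) (hwacwbc : wac ≠ wbc)
    (hau : a ≠ u) (hbu : b ≠ u) (hcu : c ≠ u) (p q : Fin 3 → Bool) (h : hammingDist p q = 2) :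
    cubeMap v a b c wab wac wbc u p ≠ cubeMap v a b c wab wac wbc u q := by
  obtain ⟨x, y, z, rfl⟩ := exists_eq_vec_three p
  obtain ⟨x', y', z', rfl⟩ := exists_eq_vec_three q
  cases x <;> cases y <;> cases z <;> cases x' <;> cases y' <;> cases z' <;>
    first | exact absurd h (by decide) | assumption | exact Ne.symm ‹_›

end CubeMap

/-- In a median graph, if three edges at a vertex pairwise span 4-cycles, then they
span a 3-cube. -/
theorem squares_span_threeCube {V : Type*} (X : SimpleGraph V) (hX : MedianGraph X)
    (v a b c : V) (hva : X.Adj v a) (hvb : X.Adj v b) (hvc : X.Adj v c)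
    (hab : a ≠ b) (hac : a ≠ c) (hbc : b ≠ c)
    (hsab : ∃ w, w ≠ v ∧ X.Adj a w ∧ X.Adj b w)
    (hsac : ∃ w, w ≠ v ∧ X.Adj a w ∧ X.Adj c w)
    (hsbc : ∃ w, w ≠ v ∧ X.Adj b w ∧ X.Adj c w) :
    ∃ S : Set V, v ∈ S ∧ a ∈ S ∧ b ∈ S ∧ c ∈ S ∧ S.ncard = 8 ∧
      Nonempty (X.induce S ≃g cubeGraph 3) ∧
      ∀ w ∈ S, (X.Adj v w ↔ w = a ∨ w = b ∨ w = c) := by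
  obtain ⟨wab, hwabv, hawab, hbwab⟩ := hsab
  obtain ⟨wac, hwacv, hawac, hcwac⟩ := hsac
  obtain ⟨wbc, hwbcv, hbwbc, hcwbc⟩ := hsbc
  have eq_v : ∀ w, X.Adj a w → X.Adj b w → X.Adj c w → w = v := fun w haw hbw hcw =>
    (hX.eq_of_adj_of_adj_of_adj hab hac hbc hva hvb hvc haw.symm hbw.symm hcw.symm).symm
  have hwabwac : wab ≠ wac := fun h => hwabv (eq_v wab hawab hbwab (h ▸ hcwac))
  have hwabwbc : wab ≠ wbc := fun h => hwabv (eq_v wab hawab hbwab (h ▸ hcwbc))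
  have hwacwbc : wac ≠ wbc := fun h => hwacv (eq_v wac hawac (h ▸ hbwbc) hcwac)
  obtain ⟨u, hwabu, hwacu, hwbcu⟩ := hX.exists_adj_of_dist_eq_two
    (hX.dist_eq_two hwabwac hawab.symm hawac) (hX.dist_eq_two hwacwbc hcwac.symm hcwbc)
    (hX.dist_eq_two hwabwbc hbwab.symm hbwbc)
  have hau : a ≠ u := fun h => hwbcv (eq_v wbc (h ▸ hwbcu).symm hbwbc hcwbc)
  have hbu : b ≠ u := fun h => hwacv (eq_v wac hawac (h ▸ hwacu).symm hcwac)
  have hcu : c ≠ u := fun h => hwabv (eq_v wab hawab hbwab (h ▸ hwabu).symm)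
  exact exists_induce_iso_cubeGraph_three <| hX.cubeEmbedding
    (cubeMapHom hva hvb hvc hawab hbwab hawac hcwac hbwbc hcwbc hwabu hwacu hwbcu)
    (cubeMap_ne_of_hammingDist_eq_two hab hac hbc hwabv.symm hwacv.symm hwbcv.symm
      hwabwac hwabwbc hwacwbc hau hbu hcu)
end

section
/- Let G be a group acting on a median graph X by graph automorphisms, and let z be a central element of G such that for some vertex o the set {d(o, z^n · o) : n ∈ ℤ} is unbounded. Then there exists a group homomorphism Θ : G → ℤ with Θ(z) ≠ 0. -/
open SimpleGraph

/-!
Put `t = φ z` and fix an ultrafilter `𝒰` on `ℤ` along which `n` becomes divisible by every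
nonzero integer. The two-sided Busemann function `β(x) = lim_𝒰 (d(x, t^n o) - d(x, t^(-n) o))`
satisfies `β(x) - β(o) = -2 ∑ drift(S)` over the halfspaces `S` containing `x` but not `o`, where
`drift(S) = lim_𝒰 (1_S(t^n o) - 1_S(t^(-n) o))`. The drift of a halfspace does not depend on the
orbit used to compute it: a periodic halfspace has drift `0` by the choice of `𝒰`, and an
aperiodic one has only finitely many translates splitting two given vertices. As `z` is central,
`g ↦ β(g o)` is therefore a homomorphism `Θ`.

Every halfspace cutting the orbit of `o` is a translate of one of the finitely many halfspaces
splitting `o` and `t o`. If all of these had drift `0`, only boundedly many of their translates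
could separate `t^n o` from `o`, and the orbit would be bounded. A halfspace of positive drift
contains the forward end of the orbit only, so a translate of it separates `t^k o` from `o` for
large `k`, while no halfspace doing so has negative drift: hence `Θ(z^k) = β(t^k o) < 0`.
-/

open Filter
open scoped Pointwise

section

variable {V : Type*} {X : SimpleGraph V}

theorem SimpleGraph.Connected.exists_adj_dist_add_one (hc : X.Connected) {x y : V}
    (hxy : x ≠ y) : ∃ x', X.Adj x x' ∧ X.dist x' y + 1 = X.dist x y := by
  obtain ⟨p, hp⟩ := hc.exists_walk_length_eq_dist x y
  cases p with
  | nil => exact absurd rfl hxy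
  | cons hadj q =>
    rename_i x'
    refine ⟨x', hadj, le_antisymm ?_ ?_⟩
    · have := dist_le q
      simp only [Walk.length_cons] at hp
      omega
    · have := hc.dist_triangle (u := x) (v := x') (w := y)
      rw [dist_eq_one_iff_adj.mpr hadj] at this
      omega

theorem SimpleGraph.Connected.induction_on_dist (hc : X.Connected) (o : V) {P : V → Prop}
    (base : P o) (step : ∀ x x', X.Adj x x' → X.dist x' o + 1 = X.dist x o → P x' → P x)
    (x : V) : P x := by
  induction hd : X.dist x o using Nat.strong_induction_on generalizing x with
  | _ k ih =>
    by_cases hxo : x = o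
    · exact hxo ▸ base
    obtain ⟨x', hadj, hx'⟩ := hc.exists_adj_dist_add_one hxo
    exact step x x' hadj hx' (ih _ (by omega) x' rfl)

theorem SimpleGraph.Iso.dist_smul (f : X ≃g X) (u v : V) : X.dist (f • u) (f • v) = X.dist u v := by
  have dist_le : ∀ (g : X ≃g X) a b, X.dist (g a) (g b) ≤ X.dist a b := fun g a b => by
    by_cases h : X.Reachable a b
    · obtain ⟨p, hp⟩ := h.exists_walk_length_eq_dist
      simpa [hp] using dist_le (p.map g.toHom)
    · have : ¬X.Reachable (g a) (g b) := fun h' => h (by simpa using h'.map g.symm.toHom)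
      simp [dist_eq_zero_of_not_reachable this]
  exact (dist_le f u v).antisymm (by simpa using dist_le f.symm (f u) (f v))

theorem IsConvex.smul {A : Set V} (hA : IsConvex X A) (f : X ≃g X) : IsConvex X (f • A) := by
  intro x hx y hy w hw
  rw [Set.mem_smul_set_iff_inv_smul_mem] at hx hy ⊢
  refine hA _ hx _ hy _ ?_
  simpa only [Iso.dist_smul] using hw

theorem IsHalfspace.smul {A : Set V} (hA : IsHalfspace X A) (f : X ≃g X) :
    IsHalfspace X (f • A) := by
  obtain ⟨hne, hnu, hcv, hccv⟩ := hA
  refine ⟨hne.smul_set, ?_, hcv.smul f, ?_⟩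
  · rwa [Ne, Set.smul_set_eq_univ]
  · rw [← Set.smul_set_compl]
    exact hccv.smul f

theorem IsHalfspace.compl {A : Set V} (hA : IsHalfspace X A) : IsHalfspace X Aᶜ := by
  obtain ⟨hne, hnu, hcv, hccv⟩ := hA
  exact ⟨Set.nonempty_compl.mpr hnu, by simpa using hne.ne_empty, hccv, by rwa [compl_compl]⟩

theorem MedianGraph.dist_ne_of_adj (hX : MedianGraph X) {u v : V} (huv : X.Adj u v) (p : V) :
    X.dist p u ≠ X.dist p v := by
  obtain ⟨m, ⟨hu, hp, hv⟩, -⟩ := hX.2 u p v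
  rw [dist_eq_one_iff_adj.mpr huv] at hv
  have hm : m = u ∨ m = v := by
    rcases Nat.eq_zero_or_pos (X.dist u m) with h | h
    · exact .inl (hX.1.dist_eq_zero_iff.mp h).symm
    · exact .inr (hX.1.dist_eq_zero_iff.mp (by omega))
  rcases hm with rfl | rfl <;> simp only [dist_self, dist_comm (u := p)] at hu hp hv ⊢ <;> omega

def SimpleGraph.edgeHalfspace (X : SimpleGraph V) (u v : V) : Set V :=
  {w | X.dist w u < X.dist w v}

theorem SimpleGraph.Connected.mem_edgeHalfspace_iff (hc : X.Connected) {u v w : V}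
    (huv : X.Adj u v) : w ∈ X.edgeHalfspace u v ↔ X.dist w v = X.dist w u + 1 := by
  have := hc.dist_triangle (u := w) (v := u) (w := v)
  rw [dist_eq_one_iff_adj.mpr huv] at this
  exact ⟨fun h => le_antisymm this h, fun h => show X.dist w u < X.dist w v by omega⟩

theorem MedianGraph.compl_edgeHalfspace (hX : MedianGraph X) {u v : V} (huv : X.Adj u v) :
    (X.edgeHalfspace u v)ᶜ = X.edgeHalfspace v u := by
  ext w
  have := hX.dist_ne_of_adj huv w
  change ¬(X.dist w u < X.dist w v) ↔ X.dist w v < X.dist w u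
  omega

/-- If the first edge `xw` of a geodesic from `x` to `y` left `X.edgeHalfspace u v`, the medians
of `x, y, u` and of `w, y, v` would both be the median of `x, y, v`, putting `w` closer to `u`
than to `v`. -/
theorem MedianGraph.mem_edgeHalfspace_of_adj (hX : MedianGraph X) {u v x y w : V}
    (huv : X.Adj u v) (hx : x ∈ X.edgeHalfspace u v) (hy : y ∈ X.edgeHalfspace u v)
    (hxw : X.Adj x w) (hw : X.dist x w + X.dist w y = X.dist x y) :
    w ∈ X.edgeHalfspace u v := by
  have hc := hX.1
  have := dist_eq_one_iff_adj.mpr huv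
  have := dist_eq_one_iff_adj.mpr hxw
  have := dist_eq_one_iff_adj.mpr hxw.symm
  rw [hc.mem_edgeHalfspace_iff huv] at hx hy
  by_contra hwW
  rw [← Set.mem_compl_iff, hX.compl_edgeHalfspace huv, hc.mem_edgeHalfspace_iff huv.symm] at hwW
  obtain ⟨ν, ⟨hν₁, hν₂, hν₃⟩, -⟩ := hX.2 x y u
  obtain ⟨μ, ⟨hμ₁, hμ₂, hμ₃⟩, -⟩ := hX.2 w y v
  obtain ⟨m, -, huniq⟩ := hX.2 x y v
  have := hc.dist_triangle (u := w) (v := x) (w := u)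
  have := hc.dist_triangle (u := x) (v := w) (w := v)
  have := hc.dist_triangle (u := ν) (v := u) (w := v)
  have := hc.dist_triangle (u := x) (v := ν) (w := v)
  have := hc.dist_triangle (u := y) (v := ν) (w := v)
  have := hc.dist_triangle (u := x) (v := w) (w := μ)
  have := hc.dist_triangle (u := x) (v := μ) (w := y)
  have := hc.dist_triangle (u := x) (v := μ) (w := v)
  have hμν : μ = ν := (huniq μ ⟨by omega, hμ₂, by omega⟩).trans
    (huniq ν ⟨hν₁, by omega, by omega⟩).symm
  subst hμν
  have := hc.dist_triangle (u := w) (v := μ) (w := u)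
  omega

theorem MedianGraph.isConvex_edgeHalfspace (hX : MedianGraph X) {u v : V} (huv : X.Adj u v) :
    IsConvex X (X.edgeHalfspace u v) := by
  intro x hx y hy w
  revert x
  refine hX.1.induction_on_dist w (fun hw _ => hw) fun x x' hxx' hx'w ih hx hxwy => ?_
  have := dist_eq_one_iff_adj.mpr hxx'
  have := hX.1.dist_triangle (u := x') (v := w) (w := y)
  have := hX.1.dist_triangle (u := x) (v := x') (w := y)
  exact ih (hX.mem_edgeHalfspace_of_adj huv hx hy hxx' (by omega)) (by omega)

theorem MedianGraph.isHalfspace_edgeHalfspace (hX : MedianGraph X) {u v : V}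
    (huv : X.Adj u v) : IsHalfspace X (X.edgeHalfspace u v) := by
  have hu : u ∈ X.edgeHalfspace u v :=
    show X.dist u u < X.dist u v by simpa using hX.1.pos_dist_of_ne huv.ne
  have hv : v ∉ X.edgeHalfspace u v := by simp [edgeHalfspace]
  refine ⟨⟨u, hu⟩, fun h => hv (h ▸ trivial), hX.isConvex_edgeHalfspace huv, ?_⟩
  rw [hX.compl_edgeHalfspace huv]
  exact hX.isConvex_edgeHalfspace huv.symm

theorem MedianGraph.eq_edgeHalfspace (hX : MedianGraph X) {A : Set V} (hA : IsHalfspace X A)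
    {x x' : V} (hxx' : X.Adj x x') (hx : x ∈ A) (hx' : x' ∉ A) : A = X.edgeHalfspace x x' := by
  have := dist_eq_one_iff_adj.mpr hxx'
  have := dist_eq_one_iff_adj.mpr hxx'.symm
  ext w
  have := hX.dist_ne_of_adj hxx' w
  have := hX.1.dist_triangle (u := w) (v := x) (w := x')
  have := hX.1.dist_triangle (u := w) (v := x') (w := x)
  change _ ↔ X.dist w x < X.dist w x'
  constructor
  · intro hw
    by_contra hlt
    exact hx' (hA.2.2.1 w hw x hx x' (by omega))
  · intro hlt
    by_contra hw
    exact hA.2.2.2 w hw x' hx' x (by omega) hx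

def SimpleGraph.separatingHalfspaces (X : SimpleGraph V) (x y : V) : Set (Set V) :=
  {A | IsHalfspace X A ∧ x ∈ A ∧ y ∉ A}

def SimpleGraph.splittingHalfspaces (X : SimpleGraph V) (x y : V) : Set (Set V) :=
  {A | IsHalfspace X A ∧ ¬(x ∈ A ↔ y ∈ A)}

theorem SimpleGraph.splittingHalfspaces_eq_union (x y : V) :
    X.splittingHalfspaces x y = X.separatingHalfspaces x y ∪ X.separatingHalfspaces y x := by
  ext A
  simp only [splittingHalfspaces, separatingHalfspaces, Set.mem_union, Set.mem_ofPred_eq]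
  tauto

theorem SimpleGraph.compl_mem_splittingHalfspaces {x y : V} {A : Set V}
    (hA : A ∈ X.splittingHalfspaces x y) : Aᶜ ∈ X.splittingHalfspaces x y :=
  ⟨hA.1.compl, by simpa only [Set.mem_compl_iff, not_iff_not] using hA.2⟩

theorem SimpleGraph.separatingHalfspaces_self (x : V) : X.separatingHalfspaces x x = ∅ :=
  Set.eq_empty_of_forall_notMem fun _ hA => hA.2.2 hA.2.1

theorem SimpleGraph.edgeHalfspace_notMem_separatingHalfspaces (x x' y : V) :
    X.edgeHalfspace x x' ∉ X.separatingHalfspaces x' y := fun h => by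
  have : X.dist x' x < X.dist x' x' := h.2.1
  simp at this

theorem MedianGraph.separatingHalfspaces_eq_insert_s9 (hX : MedianGraph X) {x x' y : V}
    (hxx' : X.Adj x x') (hx' : X.dist x' y + 1 = X.dist x y) :
    X.separatingHalfspaces x y = insert (X.edgeHalfspace x x') (X.separatingHalfspaces x' y) := by
  have := dist_eq_one_iff_adj.mpr hxx'
  ext A
  simp only [separatingHalfspaces, Set.mem_insert_iff, Set.mem_ofPred_eq]
  constructor
  · rintro ⟨hA, hxA, hyA⟩
    by_cases hx'A : x' ∈ A
    · exact .inr ⟨hA, hx'A, hyA⟩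
    · exact .inl (hX.eq_edgeHalfspace hA hxx' hxA hx'A)
  · rintro (rfl | ⟨hA, hx'A, hyA⟩)
    · refine ⟨hX.isHalfspace_edgeHalfspace hxx', ?_, ?_⟩
      · show X.dist x x < X.dist x x'
        rw [dist_self]
        omega
      · show ¬X.dist y x < X.dist y x'
        rw [dist_comm (u := y), dist_comm (u := y)]
        omega
    · exact ⟨hA, by_contra fun hxA => hA.2.2.2 x hxA y hyA x' (by omega) hx'A, hyA⟩

theorem MedianGraph.finite_separatingHalfspaces_and_ncard (hX : MedianGraph X) (x y : V) :
    (X.separatingHalfspaces x y).Finite ∧ (X.separatingHalfspaces x y).ncard = X.dist x y := by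
  revert x
  refine hX.1.induction_on_dist y ?_ fun x x' hxx' hx' ⟨hfin, hcard⟩ => ?_
  · simp [separatingHalfspaces_self]
  · rw [hX.separatingHalfspaces_eq_insert_s9 hxx' hx',
      Set.ncard_insert_of_notMem (edgeHalfspace_notMem_separatingHalfspaces x x' y) hfin]
    exact ⟨hfin.insert _, by omega⟩

theorem MedianGraph.finite_separatingHalfspaces (hX : MedianGraph X) (x y : V) :
    (X.separatingHalfspaces x y).Finite :=
  (hX.finite_separatingHalfspaces_and_ncard x y).1

theorem MedianGraph.ncard_separatingHalfspaces (hX : MedianGraph X) (x y : V) :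
    (X.separatingHalfspaces x y).ncard = X.dist x y :=
  (hX.finite_separatingHalfspaces_and_ncard x y).2

theorem MedianGraph.finite_splittingHalfspaces (hX : MedianGraph X) (x y : V) :
    (X.splittingHalfspaces x y).Finite := by
  rw [splittingHalfspaces_eq_union]
  exact (hX.finite_separatingHalfspaces x y).union (hX.finite_separatingHalfspaces y x)

theorem MedianGraph.dist_sub_dist_of_adj (hX : MedianGraph X) {x x' : V} (hxx' : X.Adj x x')
    (c : V) :
    (X.dist x c : ℤ) - X.dist x' c = 1 - 2 * (X.edgeHalfspace x x').indicator 1 c := by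
  rw [dist_comm (u := x), dist_comm (u := x')]
  by_cases hc : c ∈ X.edgeHalfspace x x'
  · rw [Set.indicator_of_mem hc, (hX.1.mem_edgeHalfspace_iff hxx').mp hc]
    simp
  · have hc' : c ∈ X.edgeHalfspace x' x := by rwa [← hX.compl_edgeHalfspace hxx']
    rw [Set.indicator_of_notMem hc, (hX.1.mem_edgeHalfspace_iff hxx'.symm).mp hc']
    simp

theorem Filter.limUnder_eq_of_eventually_eq {α : Type*} {l : Filter α} [l.NeBot] {f : α → ℤ}
    {v : ℤ} (h : ∀ᶠ a in l, f a = v) : limUnder l f = v :=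
  Tendsto.limUnder_eq (by rwa [nhds_discrete, tendsto_pure])

theorem Ultrafilter.eventually_eq_limUnder_of_abs_le {α : Type*} (U : Ultrafilter α)
    {f : α → ℤ} {C : ℤ} (hf : ∀ a, |f a| ≤ C) : ∀ᶠ a in U, f a = limUnder (U : Filter α) f := by
  obtain ⟨v, -, hv⟩ := (U.map f).eq_pure_of_finite_mem (Set.finite_Icc (-C) C)
    (Ultrafilter.mem_map.mpr (Eventually.of_forall fun a => abs_le.mp (hf a)))
  have hfv : ∀ᶠ a in U, f a = v :=
    Ultrafilter.mem_map.mp (hv ▸ Ultrafilter.mem_pure.mpr rfl : {v} ∈ U.map f)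
  rwa [limUnder_eq_of_eventually_eq hfv]

/-- Along this ultrafilter `n` is eventually divisible by every nonzero integer, which makes the
drift of a periodic halfspace vanish. -/
noncomputable def factorialUltrafilter : Ultrafilter ℤ :=
  Ultrafilter.of (map (fun k : ℕ => (k.factorial : ℤ)) atTop)

local notation "𝒰" => (factorialUltrafilter : Filter ℤ)

theorem factorialUltrafilter_eventually_of_atTop {P : ℤ → Prop}
    (h : ∀ᶠ k : ℕ in atTop, P k.factorial) : ∀ᶠ n in 𝒰, P n :=
  Ultrafilter.of_le _ h

theorem eventually_dvd_factorialUltrafilter {m : ℤ} (hm : m ≠ 0) : ∀ᶠ n in 𝒰, m ∣ n :=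
  factorialUltrafilter_eventually_of_atTop <| (eventually_ge_atTop m.natAbs).mono fun k hk =>
    Int.natAbs_dvd_natAbs.mp (by simpa using Nat.dvd_factorial (Int.natAbs_pos.mpr hm) hk)

theorem eventually_ge_factorialUltrafilter (N : ℤ) : ∀ᶠ n in 𝒰, N ≤ n :=
  factorialUltrafilter_eventually_of_atTop <| (eventually_ge_atTop N.toNat).mono fun k hk => by
    have := Nat.self_le_factorial k
    omega

theorem eventually_notMem_factorialUltrafilter {E : Set ℤ} (hE : E.Finite) :
    ∀ᶠ n in 𝒰, n ∉ E ∧ -n ∉ E := by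
  obtain ⟨M, hM⟩ := (hE.image abs).bddAbove
  filter_upwards [eventually_ge_factorialUltrafilter (M + 1)] with n hn
  have := le_abs_self n
  refine ⟨fun h => ?_, fun h => ?_⟩
  · have := hM (Set.mem_image_of_mem abs h)
    omega
  · have := hM (Set.mem_image_of_mem abs h)
    rw [abs_neg] at this
    omega

theorem zpow_smul_mem_zpow_smul_set_iff {H α : Type*} [Group H] [MulAction H α] (t : H) (j m : ℤ)
    (x : α) (S : Set α) : t ^ j • x ∈ t ^ m • S ↔ t ^ (j - m) • x ∈ S := by
  rw [Set.mem_smul_set_iff_inv_smul_mem, smul_smul, ← zpow_neg, ← zpow_add, neg_add_eq_sub]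

theorem exists_not_iff_add_one {P : ℤ → Prop} {a b : ℤ} (h : ¬(P a ↔ P b)) :
    ∃ m, ¬(P m ↔ P (m + 1)) := by
  by_contra! hP
  have hP0 : ∀ n, P n ↔ P 0 := fun n => by
    induction n using Int.induction_on with
    | zero => rfl
    | succ n ih => exact (hP n).symm.trans ih
    | pred n ih => exact (hP (-n - 1)).trans (by rwa [sub_add_cancel])
  exact h ((hP0 a).trans (hP0 b).symm)

theorem forall_iff_of_forall_le_abs {P : ℤ → Prop} {N : ℤ}
    (h : ∀ m, N ≤ |m| → (P m ↔ P (m + 1))) :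
    (∀ m, N ≤ m → (P m ↔ P N)) ∧ (∀ m, m ≤ -N → (P m ↔ P (-N))) := by
  refine ⟨fun m hm => ?_, fun m hm => ?_⟩
  · induction m, hm using Int.leInduction with
    | base => rfl
    | succ m hm ih => exact (h m (hm.trans (le_abs_self m))).symm.trans ih
  · induction m, hm using Int.leInductionDown with
    | base => rfl
    | pred m hm ih =>
      exact (h (m - 1) (le_abs.mpr (.inr (by omega)))).trans (by rwa [sub_add_cancel])

section Automorphism

variable (t : X ≃g X)

/-- `1`, `-1` or `0` according as, along `𝒰`, `S` contains only the forward end of the `t`-orbit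
of `y`, only its backward end, or both or neither. -/
noncomputable def drift (y : V) (S : Set V) : ℤ :=
  limUnder 𝒰 fun n => S.indicator 1 (t ^ n • y) - S.indicator 1 (t ^ (-n) • y)

noncomputable def twoSidedBusemann (y x : V) : ℤ :=
  limUnder 𝒰 fun n => (X.dist x (t ^ n • y) : ℤ) - X.dist x (t ^ (-n) • y)

def IsPeriodicUnder (A : Set V) : Prop :=
  ∃ p : ℤ, p ≠ 0 ∧ t ^ p • A = A

variable {t}

theorem eventually_drift (y : V) (S : Set V) :
    ∀ᶠ n in 𝒰, S.indicator 1 (t ^ n • y) - S.indicator 1 (t ^ (-n) • y) = drift t y S :=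
  factorialUltrafilter.eventually_eq_limUnder_of_abs_le (C := 1) fun n => by
    classical
    simp only [Set.indicator_apply, Pi.one_apply]
    split_ifs <;> simp

theorem drift_compl (y : V) (S : Set V) : drift t y Sᶜ = -drift t y S := by
  refine limUnder_eq_of_eventually_eq ((eventually_drift (t := t) y S).mono fun n hn => ?_)
  simp only [Set.indicator_compl, Pi.sub_apply, Pi.one_apply, ← hn]
  ring

theorem zpow_smul_eq_of_dvd {A : Set V} {p n : ℤ} (hp : t ^ p • A = A) (hpn : p ∣ n) :
    t ^ n • A = A := by
  obtain ⟨c, rfl⟩ := hpn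
  rw [zpow_mul]
  exact MulAction.mem_stabilizer_iff.mp
    (Subgroup.zpow_mem _ (MulAction.mem_stabilizer_iff.mpr hp) c)

theorem drift_eq_zero_of_isPeriodicUnder {A : Set V} (hA : IsPeriodicUnder t A) (y : V) :
    drift t y A = 0 := by
  obtain ⟨p, hp0, hp⟩ := hA
  have key : ∀ m, p ∣ m → (t ^ m • y ∈ A ↔ y ∈ A) := fun m hm => by
    conv_lhs => rw [← zpow_smul_eq_of_dvd hp hm]
    exact Set.smul_mem_smul_set_iff
  refine limUnder_eq_of_eventually_eq
    ((eventually_dvd_factorialUltrafilter hp0).mono fun n hn => ?_)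
  rw [Set.indicator_eq_indicator ((key n hn).trans (key (-n) (dvd_neg.mpr hn)).symm) (g := 1) rfl,
    sub_self]

theorem finite_range_zpow_smul_of_isPeriodicUnder {A : Set V} (hA : IsPeriodicUnder t A) :
    (Set.range fun j : ℤ => t ^ j • A).Finite := by
  obtain ⟨p, hp0, hp⟩ := hA
  refine ((Set.finite_Ico 0 |p|).image fun j => t ^ j • A).subset ?_
  rintro _ ⟨j, rfl⟩
  refine ⟨j % |p|, ⟨Int.emod_nonneg _ (abs_ne_zero.mpr hp0),
    Int.emod_lt_of_pos _ (abs_pos.mpr hp0)⟩, ?_⟩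
  show t ^ (j % |p|) • A = t ^ j • A
  conv_rhs => rw [← Int.emod_add_mul_ediv j |p|, zpow_add, mul_smul,
    zpow_smul_eq_of_dvd hp (dvd_mul_of_dvd_left (self_dvd_abs p) _)]

theorem injective_zpow_smul_of_not_isPeriodicUnder {A : Set V} (hA : ¬IsPeriodicUnder t A) :
    Function.Injective fun n : ℤ => t ^ n • A := by
  intro a b hab
  by_contra hne
  refine hA ⟨a - b, sub_ne_zero.mpr hne, ?_⟩
  simp only at hab
  rw [sub_eq_neg_add, zpow_add, mul_smul, hab, smul_smul, ← zpow_add, neg_add_cancel, zpow_zero,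
    one_smul]

/-- The translates `t^(-n) A` are pairwise distinct, and only finitely many halfspaces split `y`
and `o`. -/
theorem MedianGraph.finite_setOf_not_iff (hX : MedianGraph X) {A : Set V} (hA : IsHalfspace X A)
    (hper : ¬IsPeriodicUnder t A) (y o : V) :
    {n : ℤ | ¬(t ^ n • y ∈ A ↔ t ^ n • o ∈ A)}.Finite := by
  have hinj : Function.Injective fun n : ℤ => t ^ (-n) • A := fun a b h =>
    neg_injective (injective_zpow_smul_of_not_isPeriodicUnder hper h)
  refine ((hX.finite_splittingHalfspaces y o).preimage hinj.injOn).subset fun n hn => ?_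
  refine ⟨hA.smul _, ?_⟩
  rwa [Set.mem_smul_set_iff_inv_smul_mem, Set.mem_smul_set_iff_inv_smul_mem, ← zpow_neg, neg_neg]

theorem MedianGraph.drift_eq_drift (hX : MedianGraph X) {A : Set V} (hA : IsHalfspace X A)
    (y o : V) : drift t y A = drift t o A := by
  by_cases hper : IsPeriodicUnder t A
  · rw [drift_eq_zero_of_isPeriodicUnder hper, drift_eq_zero_of_isPeriodicUnder hper]
  refine limUnder_eq_of_eventually_eq ?_
  filter_upwards [eventually_drift o A,
    eventually_notMem_factorialUltrafilter (hX.finite_setOf_not_iff hA hper y o)]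
    with n hn ⟨h₁, h₂⟩
  rw [← hn, Set.indicator_eq_indicator (not_not.mp h₁) (g := 1) rfl,
    Set.indicator_eq_indicator (not_not.mp h₂) (g := 1) rfl]

theorem drift_zpow_smul_set (o : V) (S : Set V) (m : ℤ) :
    drift t o (t ^ m • S) = drift t (t ^ (-m) • o) S := by
  unfold drift
  congr 1
  ext n
  congr 1 <;> refine Set.indicator_eq_indicator ?_ rfl <;>
    rw [zpow_smul_mem_zpow_smul_set_iff, smul_smul, ← zpow_add, sub_eq_add_neg]

theorem MedianGraph.drift_zpow_smul (hX : MedianGraph X) {S : Set V} (hS : IsHalfspace X S)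
    (o : V) (m : ℤ) : drift t o (t ^ m • S) = drift t o S := by
  rw [drift_zpow_smul_set, hX.drift_eq_drift hS]

theorem dist_zpow_neg_smul (y : V) (n : ℤ) : X.dist y (t ^ (-n) • y) = X.dist y (t ^ n • y) := by
  rw [← Iso.dist_smul (t ^ n), smul_smul, ← zpow_add, add_neg_cancel, zpow_zero, one_smul,
    dist_comm]

theorem eventually_twoSidedBusemann (hc : X.Connected) (y x : V) :
    ∀ᶠ n in 𝒰, (X.dist x (t ^ n • y) : ℤ) - X.dist x (t ^ (-n) • y) = twoSidedBusemann t y x :=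
  factorialUltrafilter.eventually_eq_limUnder_of_abs_le (C := 2 * X.dist x y) fun n => by
    have := dist_zpow_neg_smul (t := t) y n
    have := hc.dist_triangle (u := x) (v := y) (w := t ^ n • y)
    have := hc.dist_triangle (u := y) (v := x) (w := t ^ n • y)
    have := hc.dist_triangle (u := x) (v := y) (w := t ^ (-n) • y)
    have := hc.dist_triangle (u := y) (v := x) (w := t ^ (-n) • y)
    rw [dist_comm (u := y) (v := x)] at *
    rw [abs_le]
    constructor <;> omega

theorem twoSidedBusemann_self (y : V) : twoSidedBusemann t y y = 0 :=
  limUnder_eq_of_eventually_eq <| Eventually.of_forall fun n => by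
    rw [dist_zpow_neg_smul, sub_self]

theorem twoSidedBusemann_smul_smul {f : X ≃g X} (hf : Commute f t) (y x : V) :
    twoSidedBusemann t (f • y) (f • x) = twoSidedBusemann t y x := by
  have key : ∀ n : ℤ, X.dist (f • x) (t ^ n • f • y) = X.dist x (t ^ n • y) := fun n => by
    rw [smul_smul, ← (hf.zpow_right n).eq, mul_smul, Iso.dist_smul]
  simp only [twoSidedBusemann, key]

theorem MedianGraph.twoSidedBusemann_of_adj (hX : MedianGraph X) (y : V) {x x' : V}
    (hxx' : X.Adj x x') :
    twoSidedBusemann t y x = twoSidedBusemann t y x' - 2 * drift t y (X.edgeHalfspace x x') := by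
  refine limUnder_eq_of_eventually_eq ?_
  filter_upwards [eventually_twoSidedBusemann hX.1 y x', eventually_drift y (X.edgeHalfspace x x')]
    with n h₁ h₂
  have := hX.dist_sub_dist_of_adj hxx' (t ^ n • y)
  have := hX.dist_sub_dist_of_adj hxx' (t ^ (-n) • y)
  linarith

theorem MedianGraph.twoSidedBusemann_sub_eq_finsum (hX : MedianGraph X) (y o x : V) :
    twoSidedBusemann t y x - twoSidedBusemann t y o =
      -2 * ∑ᶠ S ∈ X.separatingHalfspaces x o, drift t y S := by
  revert x
  refine hX.1.induction_on_dist o (by simp [separatingHalfspaces_self]) fun x x' hxx' hx' ih => ?_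
  rw [hX.separatingHalfspaces_eq_insert_s9 hxx' hx', finsum_mem_insert _
    (edgeHalfspace_notMem_separatingHalfspaces x x' o) (hX.finite_separatingHalfspaces x' o),
    hX.twoSidedBusemann_of_adj y hxx']
  linarith

theorem MedianGraph.twoSidedBusemann_sub_eq_sub (hX : MedianGraph X) (y y' o x : V) :
    twoSidedBusemann t y x - twoSidedBusemann t y o =
      twoSidedBusemann t y' x - twoSidedBusemann t y' o := by
  rw [hX.twoSidedBusemann_sub_eq_finsum, hX.twoSidedBusemann_sub_eq_finsum]
  congr 1
  exact finsum_mem_congr rfl fun S hS => hX.drift_eq_drift hS.1 y y'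

theorem MedianGraph.twoSidedBusemann_mul_smul (hX : MedianGraph X) {f : X ≃g X}
    (hf : Commute f t) (g : X ≃g X) (o : V) :
    twoSidedBusemann t o ((f * g) • o) =
      twoSidedBusemann t o (f • o) + twoSidedBusemann t o (g • o) := by
  have h₁ := twoSidedBusemann_smul_smul hf (f⁻¹ • o) (g • o)
  have h₂ := twoSidedBusemann_smul_smul hf (f⁻¹ • o) o
  rw [smul_inv_smul, ← mul_smul] at h₁
  rw [smul_inv_smul] at h₂
  have h₃ := hX.twoSidedBusemann_sub_eq_sub (t := t) (f⁻¹ • o) o o (g • o)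
  rw [twoSidedBusemann_self] at h₃
  linarith

end Automorphism

section Dichotomy

variable {t : X ≃g X} {o : V}

def HasStableTails (t : X ≃g X) (o : V) (B : Set V) (N : ℤ) : Prop :=
  (∀ m, N ≤ m → (t ^ m • o ∈ B ↔ t ^ N • o ∈ B)) ∧
    (∀ m, m ≤ -N → (t ^ m • o ∈ B ↔ t ^ (-N) • o ∈ B))

theorem HasStableTails.drift_eq {B : Set V} {N : ℤ} (h : HasStableTails t o B N) :
    drift t o B = B.indicator 1 (t ^ N • o) - B.indicator 1 (t ^ (-N) • o) :=
  limUnder_eq_of_eventually_eq <| (eventually_ge_factorialUltrafilter N).mono fun n hn => by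
    rw [Set.indicator_eq_indicator (h.1 n hn) (g := 1) rfl,
      Set.indicator_eq_indicator (h.2 (-n) (neg_le_neg hn)) (g := 1) rfl]

theorem mem_zpow_smul_set_iff {S : Set V} (m : ℤ) : o ∈ t ^ m • S ↔ t ^ (-m) • o ∈ S := by
  rw [Set.mem_smul_set_iff_inv_smul_mem, zpow_neg]

/-- A halfspace separating `t^n o` from `o` cuts the orbit between some `t^m o` and `t^(m+1) o`,
so its translate by `t^(-m)` splits `o` and `t o`. -/
theorem exists_eq_zpow_smul_of_mem_separatingHalfspaces {S : Set V} {n : ℤ}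
    (hS : S ∈ X.separatingHalfspaces (t ^ n • o) o) :
    ∃ m : ℤ, ∃ B ∈ X.splittingHalfspaces o (t • o), S = t ^ m • B := by
  obtain ⟨m, hm⟩ := exists_not_iff_add_one (P := fun m => t ^ m • o ∈ S) (a := n) (b := 0)
    (by simp only [zpow_zero, one_smul]; exact fun h => hS.2.2 (h.mp hS.2.1))
  refine ⟨m, t ^ (-m) • S, ⟨hS.1.smul _, ?_⟩,
    by rw [smul_smul, ← zpow_add, add_neg_cancel, zpow_zero, one_smul]⟩
  rwa [mem_zpow_smul_set_iff, neg_neg, Set.mem_smul_set_iff_inv_smul_mem, ← zpow_neg, smul_smul,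
    ← zpow_add_one, neg_neg]

theorem MedianGraph.exists_hasStableTails (hX : MedianGraph X) (t : X ≃g X) (o : V) :
    ∃ N, ∀ B ∈ X.splittingHalfspaces o (t • o), ¬IsPeriodicUnder t B → HasStableTails t o B N := by
  have hE : (⋃ B ∈ X.splittingHalfspaces o (t • o), {m : ℤ | ¬IsPeriodicUnder t B ∧
      ¬(t ^ m • o ∈ B ↔ t ^ (m + 1) • o ∈ B)}).Finite := by
    refine (hX.finite_splittingHalfspaces _ _).biUnion fun B hB => ?_
    by_cases hper : IsPeriodicUnder t B
    · simp [hper]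
    refine (hX.finite_setOf_not_iff hB.1 hper (t • o) o).subset fun m hm => ?_
    change ¬(t ^ m • t • o ∈ B ↔ t ^ m • o ∈ B)
    rw [smul_smul, ← zpow_add_one, Iff.comm]
    exact hm.2
  obtain ⟨M, hM⟩ := (hE.image abs).bddAbove
  refine ⟨M + 1, fun B hB hper => forall_iff_of_forall_le_abs fun m hm => ?_⟩
  by_contra h
  have := hM ⟨m, Set.mem_biUnion hB ⟨hper, h⟩, rfl⟩
  omega

theorem indicator_one_sub_indicator_one_pos_iff {α : Type*} {S : Set α} {a b : α} :
    0 < S.indicator (1 : α → ℤ) a - S.indicator 1 b ↔ a ∈ S ∧ b ∉ S := by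
  by_cases ha : a ∈ S <;> by_cases hb : b ∈ S <;> simp [ha, hb]

theorem indicator_one_sub_indicator_one_eq_zero_iff {α : Type*} {S : Set α} {a b : α} :
    S.indicator (1 : α → ℤ) a - S.indicator 1 b = 0 ↔ (a ∈ S ↔ b ∈ S) := by
  by_cases ha : a ∈ S <;> by_cases hb : b ∈ S <;> simp [ha, hb]

section StableTails

variable {N : ℤ}
  (hN : ∀ B ∈ X.splittingHalfspaces o (t • o), ¬IsPeriodicUnder t B → HasStableTails t o B N)
include hN

/-- A halfspace of negative drift contains the backward end of the orbit but not the forward one,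
so it cannot separate `t^k o` from `o` once `k > 2N`. -/
theorem MedianGraph.drift_nonneg_of_mem_separatingHalfspaces (hX : MedianGraph X) {k : ℤ}
    (hk : 2 * N < k) {S : Set V} (hS : S ∈ X.separatingHalfspaces (t ^ k • o) o) :
    0 ≤ drift t o S := by
  obtain ⟨m, B, hB, rfl⟩ := exists_eq_zpow_smul_of_mem_separatingHalfspaces hS
  rw [hX.drift_zpow_smul hB.1]
  by_cases hper : IsPeriodicUnder t B
  · rw [drift_eq_zero_of_isPeriodicUnder hper]
  have tails := hN B hB hper
  rw [tails.drift_eq]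
  by_contra hneg
  obtain ⟨hback, hfwd⟩ := indicator_one_sub_indicator_one_pos_iff.mp
    (by linarith : (0 : ℤ) < B.indicator 1 (t ^ (-N) • o) - B.indicator 1 (t ^ N • o))
  have h₁ : t ^ (k - m) • o ∈ B := (zpow_smul_mem_zpow_smul_set_iff t k m o B).mp hS.2.1
  have h₂ : t ^ (-m) • o ∉ B := fun h => hS.2.2 ((mem_zpow_smul_set_iff m).mpr h)
  have : k - m < N := by
    by_contra! h
    exact hfwd ((tails.1 _ h).mp h₁)
  have : m < N := by
    by_contra! h
    exact h₂ ((tails.2 _ (by omega)).mpr hback)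
  omega

theorem MedianGraph.twoSidedBusemann_zpow_smul_neg (hX : MedianGraph X) {B : Set V}
    (hB : B ∈ X.splittingHalfspaces o (t • o)) (hpos : 0 < drift t o B) :
    twoSidedBusemann t o (t ^ (2 * N + 1) • o) < 0 := by
  have hper : ¬IsPeriodicUnder t B := fun hp => by
    rw [drift_eq_zero_of_isPeriodicUnder hp] at hpos
    exact lt_irrefl _ hpos
  have tails := hN B hB hper
  rw [tails.drift_eq] at hpos
  obtain ⟨hfwd, hback⟩ := indicator_one_sub_indicator_one_pos_iff.mp hpos
  have hS : t ^ N • B ∈ X.separatingHalfspaces (t ^ (2 * N + 1) • o) o := by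
    refine ⟨hB.1.smul _, ?_, ?_⟩
    · rw [zpow_smul_mem_zpow_smul_set_iff]
      exact (tails.1 _ (by omega)).mpr hfwd
    · rw [mem_zpow_smul_set_iff]
      exact hback
  have hfin := hX.finite_separatingHalfspaces (t ^ (2 * N + 1) • o) o
  have hsum := hX.twoSidedBusemann_sub_eq_finsum (t := t) o o (t ^ (2 * N + 1) • o)
  rw [twoSidedBusemann_self, sub_zero, finsum_mem_eq_finite_toFinset_sum _ hfin] at hsum
  have hle : drift t o (t ^ N • B) ≤ ∑ S ∈ hfin.toFinset, drift t o S :=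
    Finset.single_le_sum (fun S hS' => hX.drift_nonneg_of_mem_separatingHalfspaces hN
      (by omega) (hfin.mem_toFinset.mp hS')) (hfin.mem_toFinset.mpr hS)
  rw [hX.drift_zpow_smul hB.1, tails.drift_eq] at hle
  linarith

/-- A halfspace of zero drift has both ends of the orbit on the same side, so only those of its
translates that cut the orbit near `o` or near `t^n o` separate `t^n o` from `o`. -/
theorem exists_ncard_translates_le {B : Set V} (hB : B ∈ X.splittingHalfspaces o (t • o))
    (h0 : drift t o B = 0) : ∃ K : ℕ, ∀ n : ℤ, ((fun j : ℤ => t ^ j • B) ''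
      ((fun j : ℤ => t ^ j • B) ⁻¹' X.separatingHalfspaces (t ^ n • o) o)).ncard ≤ K := by
  by_cases hper : IsPeriodicUnder t B
  · exact ⟨_, fun n => Set.ncard_le_ncard (Set.image_subset_range _ _)
      (finite_range_zpow_smul_of_isPeriodicUnder hper)⟩
  have tails := hN B hB hper
  have hends : t ^ (-N) • o ∈ B ↔ t ^ N • o ∈ B :=
    (indicator_one_sub_indicator_one_eq_zero_iff.mp (tails.drift_eq ▸ h0)).symm
  have hside : ∀ j, N ≤ j ∨ j ≤ -N → (t ^ j • o ∈ B ↔ t ^ N • o ∈ B) := fun j hj => by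
    rcases hj with h | h
    · exact tails.1 j h
    · exact (tails.2 j h).trans hends
  refine ⟨2 * (Set.Ioo (-N) N).ncard, fun n => ?_⟩
  have hsub : (fun j : ℤ => t ^ j • B) ⁻¹' X.separatingHalfspaces (t ^ n • o) o ⊆
      Set.Ioo (-N) N ∪ Set.Ioo (n - N) (n + N) := by
    rintro j ⟨-, hin, hout⟩
    rw [zpow_smul_mem_zpow_smul_set_iff] at hin
    rw [mem_zpow_smul_set_iff] at hout
    by_contra hj
    simp only [Set.mem_union, Set.mem_Ioo, not_or, not_and_or, not_lt] at hj
    exact hout ((hside _ (by omega)).mpr ((hside _ (by omega)).mp hin))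
  have hfin := (Set.finite_Ioo (-N) N).union (Set.finite_Ioo (n - N) (n + N))
  calc _ ≤ (Set.Ioo (-N) N ∪ Set.Ioo (n - N) (n + N)).ncard :=
        (Set.ncard_image_le (hfin.subset hsub)).trans (Set.ncard_le_ncard hsub hfin)
    _ ≤ (Set.Ioo (-N) N).ncard + (Set.Ioo (n - N) (n + N)).ncard := Set.ncard_union_le _ _
    _ = 2 * (Set.Ioo (-N) N).ncard := by
      simp only [Set.ncard_eq_toFinset_card', Set.toFinset_Ioo, Int.card_Ioo]
      omega

theorem MedianGraph.bddAbove_range_dist_zpow_smul (hX : MedianGraph X)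
    (h0 : ∀ B ∈ X.splittingHalfspaces o (t • o), drift t o B = 0) :
    BddAbove (Set.range fun n : ℤ => X.dist o (t ^ n • o)) := by
  have h𝓑 := hX.finite_splittingHalfspaces o (t • o)
  choose! K hK using fun B hB => exists_ncard_translates_le hN hB (h0 B hB)
  refine ⟨∑ B ∈ h𝓑.toFinset, K B, ?_⟩
  rintro _ ⟨n, rfl⟩
  set T := fun B : Set V => (fun j : ℤ => t ^ j • B) ''
    ((fun j : ℤ => t ^ j • B) ⁻¹' X.separatingHalfspaces (t ^ n • o) o)
  have hcover : X.separatingHalfspaces (t ^ n • o) o ⊆ ⋃ B ∈ h𝓑.toFinset, T B := fun S hS => by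
    obtain ⟨m, B, hB, rfl⟩ := exists_eq_zpow_smul_of_mem_separatingHalfspaces hS
    exact Set.mem_biUnion (h𝓑.mem_toFinset.mpr hB) ⟨m, hS, rfl⟩
  have hfin : (⋃ B ∈ h𝓑.toFinset, T B).Finite :=
    (hX.finite_separatingHalfspaces _ _).subset
      (Set.iUnion₂_subset fun B _ => Set.image_preimage_subset _ _)
  show X.dist o (t ^ n • o) ≤ _
  rw [dist_comm, ← hX.ncard_separatingHalfspaces]
  calc _ ≤ (⋃ B ∈ h𝓑.toFinset, T B).ncard := Set.ncard_le_ncard hcover hfin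
    _ ≤ ∑ B ∈ h𝓑.toFinset, (T B).ncard := Finset.set_ncard_biUnion_le _ _
    _ ≤ _ := Finset.sum_le_sum fun B hB => hK B (h𝓑.mem_toFinset.mp hB) n

end StableTails

/-- Unbounded orbits force a halfspace splitting `o` and `t o` to have nonzero drift; replacing
it by its complement if necessary, the drift is positive. -/
theorem MedianGraph.exists_twoSidedBusemann_zpow_smul_neg (hX : MedianGraph X)
    (hunb : ¬BddAbove (Set.range fun n : ℤ => X.dist o (t ^ n • o))) :
    ∃ k : ℤ, twoSidedBusemann t o (t ^ k • o) < 0 := by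
  obtain ⟨N, hN⟩ := hX.exists_hasStableTails t o
  obtain ⟨B, hB, hB0⟩ : ∃ B ∈ X.splittingHalfspaces o (t • o), drift t o B ≠ 0 := by
    by_contra! h
    exact hunb (hX.bddAbove_range_dist_zpow_smul hN h)
  refine ⟨2 * N + 1, ?_⟩
  rcases hB0.lt_or_gt with hneg | hpos
  · exact hX.twoSidedBusemann_zpow_smul_neg hN (compl_mem_splittingHalfspaces hB)
      (by rw [drift_compl]; omega)
  · exact hX.twoSidedBusemann_zpow_smul_neg hN hB hpos

end Dichotomy

noncomputable def twoSidedBusemannHom (hX : MedianGraph X) {G : Type*} [Group G]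
    (φ : G →* (X ≃g X)) {t : X ≃g X} (ht : ∀ g, Commute (φ g) t) (o : V) :
    G →* Multiplicative ℤ :=
  MonoidHom.mk' (fun g => .ofAdd (twoSidedBusemann t o (φ g • o))) fun g h => by
    rw [map_mul, hX.twoSidedBusemann_mul_smul (ht g)]
    rfl

end

/-- If a central element of a group acting on a median graph has unbounded orbits,
then it survives in a quotient of the group isomorphic to `ℤ`. -/
theorem central_unbounded_survives_in_Z {V : Type*} (X : SimpleGraph V)
    (hX : MedianGraph X) {G : Type*} [Group G] (φ : G →* (X ≃g X))
    (z : G) (hz : z ∈ Subgroup.center G) (o : V)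
    (hunb : ¬ BddAbove (Set.range fun n : ℤ => X.dist o (φ (z ^ n) o))) :
    ∃ Θ : G →* Multiplicative ℤ, Θ z ≠ 1 := by
  have hcomm : ∀ g, Commute (φ g) (φ z) := fun g =>
    (show Commute g z from Subgroup.mem_center_iff.mp hz g).map φ
  obtain ⟨k, hk⟩ := hX.exists_twoSidedBusemann_zpow_smul_neg (t := φ z) (o := o)
    (by simp only [map_zpow] at hunb; exact hunb)
  refine ⟨twoSidedBusemannHom hX φ hcomm o, fun h => hk.ne ?_⟩
  have h' : twoSidedBusemannHom hX φ hcomm o (z ^ k) = 1 := by rw [map_zpow, h, one_zpow]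
  have : twoSidedBusemann (φ z) o (φ (z ^ k) • o) = 0 := congrArg Multiplicative.toAdd h'
  rwa [map_zpow] at this
end

section
/- In a median graph, the convex hull of a finite set of vertices (the smallest convex set of vertices containing it) is finite. -/
open SimpleGraph

/-!
For an edge `xy`, the vertices closer to `x` than to `y` form a convex set: a geodesic leaving
it would produce two medians of one triple. Hence, if `D` is convex, so is `⋃ c ∈ D, I(a, c)`:
a vertex `w` between points of `I(a, c₁)` and `I(a, c₂)` lies in `I(a, m)` for the median
`m ∈ I(c₁, c₂)` of `w, c₁, c₂`, since such a convex side containing `a` and `m` but not `w`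
would have to contain `c₁` and `c₂`, hence `w`. Adding the points one at a time, the hull of a
finite set lies in a finite union of intervals.

Intervals are finite. If `p` precedes `v` on a geodesic from `u`, all neighbours of `u` in
`I(u, v)` but at most one lie in `I(u, p)`: two exceptional ones would produce a `K₂,₃`, whose
two sides would both be medians of the other three vertices. So `u` has finitely many
neighbours in `I(u, v)`, and induction on `d(u, v)` finishes.
-/

namespace SimpleGraph

variable {V : Type*} {X : SimpleGraph V} {u v w x y z : V}

def interval (X : SimpleGraph V) (u v : V) : Set V :=
  {w | X.dist u w + X.dist w v = X.dist u v}

/-- For an edge `xy`, the vertices closer to `x` than to `y`. -/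
def side (X : SimpleGraph V) (x y : V) : Set V :=
  {z | X.dist z y = X.dist z x + 1}

def IsMedian (X : SimpleGraph V) (x y z m : V) : Prop :=
  m ∈ X.interval x y ∧ m ∈ X.interval y z ∧ m ∈ X.interval x z

@[simp]
lemma mem_interval : w ∈ X.interval u v ↔ X.dist u w + X.dist w v = X.dist u v := Iff.rfl

@[simp]
lemma mem_side : z ∈ X.side x y ↔ X.dist z y = X.dist z x + 1 := Iff.rfl

lemma left_mem_interval (u v : V) : u ∈ X.interval u v := by simp

lemma right_mem_interval (u v : V) : v ∈ X.interval u v := by simp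

lemma mem_interval_comm : w ∈ X.interval u v ↔ w ∈ X.interval v u := by
  rw [mem_interval, mem_interval, dist_comm (u := u) (v := w), dist_comm (u := w) (v := v),
    dist_comm (u := u) (v := v), add_comm]

namespace Connected

variable (hc : X.Connected)
include hc

lemma isConvex_singleton (a : V) : IsConvex X {a} := by
  rintro x rfl y rfl w hw
  rw [dist_self] at hw
  exact (hc.dist_eq_zero_iff.1 (by omega)).symm

lemma exists_adj_of_mem_interval (hw : w ∈ X.interval u v) (hwu : w ≠ u) :
    ∃ p, X.Adj u p ∧ p ∈ X.interval u v ∧ w ∈ X.interval p v := by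
  obtain ⟨q, hq⟩ := hc.exists_walk_length_eq_dist u w
  cases q with
  | nil => exact absurd rfl hwu
  | @cons _ p _ hup q =>
    refine ⟨p, hup, ?_⟩
    have hpw := dist_le q
    have := hc.dist_triangle (u := u) (v := p) (w := w)
    have := hc.dist_triangle (u := u) (v := p) (w := v)
    have := hc.dist_triangle (u := p) (v := w) (w := v)
    have := dist_eq_one_iff_adj.2 hup
    rw [Walk.length_cons] at hq
    simp only [mem_interval] at hw ⊢
    omega

lemma mem_side_of_mem_interval (hxy : X.Adj x y) (hu : u ∈ X.side x y)
    (hz : z ∈ X.interval u x) : z ∈ X.side x y := by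
  have := hc.dist_triangle (u := u) (v := z) (w := y)
  have := hc.dist_triangle (u := z) (v := x) (w := y)
  simp only [mem_side, mem_interval, dist_eq_one_iff_adj.2 hxy] at *
  omega

lemma isConvex_of_forall_adj_mem {S : Set V}
    (hS : ∀ u ∈ S, ∀ v ∈ S, ∀ p, X.Adj u p → p ∈ X.interval u v → p ∈ S) : IsConvex X S := by
  suffices ∀ n, ∀ u ∈ S, ∀ v ∈ S, X.dist u v = n → X.interval u v ⊆ S from
    fun u hu v hv w hw => this _ u hu v hv rfl hw
  intro n
  induction n using Nat.strong_induction_on with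
  | _ n ih =>
  rintro u hu v hv rfl w hw
  obtain rfl | hwu := eq_or_ne w u
  · exact hu
  obtain ⟨p, hup, hp, hwp⟩ := hc.exists_adj_of_mem_interval hw hwu
  have hpv : X.dist p v < X.dist u v := by
    have := dist_eq_one_iff_adj.2 hup
    rw [mem_interval] at hp
    omega
  exact ih _ hpv p (hS u hu v hv p hup hp) v hv rfl hwp

end Connected

end SimpleGraph

namespace MedianGraph

variable {V : Type*} {X : SimpleGraph V} {a b c c₁ c₂ m p q u v w x y z : V}
variable (hX : MedianGraph X)
include hX

lemma exists_isMedian (x y z : V) : ∃ m, X.IsMedian x y z m := (hX.2 x y z).exists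

lemma isMedian_unique {m m' : V} (h : X.IsMedian x y z m) (h' : X.IsMedian x y z m') : m = m' :=
  (hX.2 x y z).unique h h'

lemma mem_side_or_mem_side (hxy : X.Adj x y) (z : V) : z ∈ X.side x y ∨ z ∈ X.side y x := by
  obtain ⟨m, hxy', hyz, hxz⟩ := hX.exists_isMedian x y z
  have hd := dist_eq_one_iff_adj.2 hxy
  simp only [mem_interval, mem_side, dist_comm (u := z)] at *
  rcases (by omega : X.dist x m = 0 ∨ X.dist m y = 0) with h | h
  · obtain rfl := hX.1.dist_eq_zero_iff.1 h
    rw [dist_comm] at hd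
    omega
  · obtain rfl := hX.1.dist_eq_zero_iff.1 h
    omega

lemma dist_eq_two_of_adj_of_adj (ha : X.Adj u a) (hb : X.Adj u b) (hab : a ≠ b) :
    X.dist a b = 2 := by
  have hua := dist_eq_one_iff_adj.2 ha
  have hub := dist_eq_one_iff_adj.2 hb
  have := hX.1.dist_triangle (u := a) (v := u) (w := b)
  have : X.dist a b ≠ 0 := fun h => hab (hX.1.dist_eq_zero_iff.1 h)
  have : ¬X.Adj a b := fun h => by
    rcases hX.mem_side_or_mem_side h u with h | h <;> simp only [mem_side] at h <;> omega
  rw [dist_comm] at hua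
  have : X.dist a b ≠ 1 := mt dist_eq_one_iff_adj.1 this
  omega

lemma isMedian_of_adj_of_adj_of_adj (ha : X.Adj u a) (hb : X.Adj u b) (hc : X.Adj u c)
    (hab : a ≠ b) (hac : a ≠ c) (hbc : b ≠ c) : X.IsMedian a b c u := by
  have := dist_eq_one_iff_adj.2 ha.symm
  have := dist_eq_one_iff_adj.2 hb
  have := dist_eq_one_iff_adj.2 hb.symm
  have := dist_eq_one_iff_adj.2 hc
  simp only [SimpleGraph.IsMedian, mem_interval, hX.dist_eq_two_of_adj_of_adj ha hb hab,
    hX.dist_eq_two_of_adj_of_adj hb hc hbc, hX.dist_eq_two_of_adj_of_adj ha hc hac]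
  omega

lemma eq_of_three_common_neighbors (hua : X.Adj u a) (hub : X.Adj u b) (huc : X.Adj u c)
    (hma : X.Adj m a) (hmb : X.Adj m b) (hmc : X.Adj m c)
    (hab : a ≠ b) (hac : a ≠ c) (hbc : b ≠ c) : u = m :=
  hX.isMedian_unique (hX.isMedian_of_adj_of_adj_of_adj hua hub huc hab hac hbc)
    (hX.isMedian_of_adj_of_adj_of_adj hma hmb hmc hab hac hbc)

/-- The medians of `u, v, x` and of `p, v, y` are both medians of `u, v, y`, yet they lie on
different sides of `xy` if `p` does. -/
lemma mem_side_of_adj_mem_interval (hxy : X.Adj x y) (hu : u ∈ X.side x y)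
    (hv : v ∈ X.side x y) (hup : X.Adj u p) (hp : p ∈ X.interval u v) : p ∈ X.side x y := by
  refine (hX.mem_side_or_mem_side hxy p).resolve_right fun hpy => ?_
  obtain ⟨z, hzuv, hzvx, hzux⟩ := hX.exists_isMedian u v x
  obtain ⟨w, hwpv, hwvy, hwpy⟩ := hX.exists_isMedian p v y
  have hzx := hX.1.mem_side_of_mem_interval hxy hu hzux
  have hwy := hX.1.mem_side_of_mem_interval hxy.symm hpy hwpy
  have hwuv : w ∈ X.interval u v := by
    have := hX.1.dist_triangle (u := u) (v := p) (w := w)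
    have := hX.1.dist_triangle (u := u) (v := w) (w := v)
    simp only [mem_interval, dist_eq_one_iff_adj.2 hup] at *
    omega
  have hz : X.IsMedian u v y z := by
    refine ⟨hzuv, ?_, ?_⟩ <;> simp only [mem_interval, mem_side] at * <;> omega
  have hw : X.IsMedian u v y w := by
    refine ⟨hwuv, hwvy, ?_⟩
    have := hX.1.dist_triangle (u := p) (v := u) (w := x)
    have := hX.1.dist_triangle (u := u) (v := w) (w := y)
    have hdup := dist_eq_one_iff_adj.2 hup
    rw [dist_comm] at hdup
    simp only [mem_interval, mem_side, dist_eq_one_iff_adj.2 hup] at *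
    omega
  obtain rfl := hX.isMedian_unique hz hw
  simp only [mem_side] at hzx hwy
  omega

lemma isConvex_side (hxy : X.Adj x y) : IsConvex X (X.side x y) :=
  hX.1.isConvex_of_forall_adj_mem fun _ hu _ hv _ hup hp =>
    hX.mem_side_of_adj_mem_interval hxy hu hv hup hp

lemma exists_adj_side_of_notMem_interval (hw : w ∉ X.interval a c) :
    ∃ p, X.Adj w p ∧ a ∈ X.side p w ∧ c ∈ X.side p w := by
  obtain ⟨m, hawm, hwcm, hacm⟩ := hX.exists_isMedian a w c
  have hmw : m ≠ w := by rintro rfl; exact hw hacm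
  obtain ⟨p, hwp, hpm, -⟩ :=
    hX.1.exists_adj_of_mem_interval (right_mem_interval w m) hmw
  have := dist_eq_one_iff_adj.2 hwp
  have := dist_eq_one_iff_adj.2 hwp.symm
  have := dist_comm (G := X) (u := m) (v := w)
  have := dist_comm (G := X) (u := m) (v := p)
  simp only [mem_interval, mem_side] at *
  refine ⟨p, hwp, ?_, ?_⟩
  · have := hX.1.dist_triangle (u := a) (v := m) (w := p)
    have := hX.1.dist_triangle (u := a) (v := p) (w := w)
    omega
  · have := hX.1.dist_triangle (u := c) (v := m) (w := p)
    have := hX.1.dist_triangle (u := c) (v := p) (w := w)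
    have := dist_comm (G := X) (u := c) (v := w)
    have := dist_comm (G := X) (u := c) (v := m)
    omega

lemma mem_interval_of_isMedian (hx : x ∈ X.interval a c₁) (hy : y ∈ X.interval a c₂)
    (hw : w ∈ X.interval x y) (hm : X.IsMedian w c₁ c₂ m) : w ∈ X.interval a m := by
  by_contra hwam
  obtain ⟨p, hwp, ha, hm_side⟩ := hX.exists_adj_side_of_notMem_interval hwam
  have hw_side : w ∈ X.side w p := by simp [dist_eq_one_iff_adj.2 hwp]
  have hc_side : ∀ c, m ∈ X.interval w c → c ∈ X.side p w := fun c hmc =>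
    (hX.mem_side_or_mem_side hwp.symm c).resolve_right fun hc => by
      have := hX.isConvex_side hwp w hw_side c hc m hmc
      simp only [mem_side] at this hm_side
      omega
  have hconv := hX.isConvex_side hwp.symm
  have hw_side' := hconv x (hconv a ha c₁ (hc_side c₁ hm.1) x hx) y
    (hconv a ha c₂ (hc_side c₂ hm.2.2) y hy) w hw
  simp only [mem_side] at hw_side hw_side'
  omega

lemma isConvex_biUnion_interval {C : Set V} (hC : IsConvex X C) (a : V) :
    IsConvex X (⋃ c ∈ C, X.interval a c) := by
  intro x hx y hy w hw
  obtain ⟨c₁, hc₁, hx⟩ := Set.mem_iUnion₂.1 hx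
  obtain ⟨c₂, hc₂, hy⟩ := Set.mem_iUnion₂.1 hy
  obtain ⟨m, hm⟩ := hX.exists_isMedian w c₁ c₂
  exact Set.mem_biUnion (hC c₁ hc₁ c₂ hc₂ m hm.2.1) (hX.mem_interval_of_isMedian hx hy hw hm)

lemma subsingleton_adj_mem_interval_mem_side (hpq : X.Adj p q) (hp : p ∈ X.interval u q) :
    {w | X.Adj u w ∧ w ∈ X.interval u q ∧ w ∈ X.side q p}.Subsingleton := by
  rintro w ⟨huw, hwq, hwp⟩ w' ⟨huw', hw'q, hw'p⟩
  by_contra hne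
  have hww' := hX.dist_eq_two_of_adj_of_adj huw huw' hne
  obtain ⟨m, hm⟩ := hX.exists_isMedian w w' q
  have hdpq := dist_eq_one_iff_adj.2 hpq
  have hduw := dist_eq_one_iff_adj.2 huw
  have hduw' := dist_eq_one_iff_adj.2 huw'
  have := hX.1.dist_triangle (u := u) (v := m) (w := q)
  have := hX.1.dist_triangle (u := u) (v := w) (w := m)
  have := hX.1.dist_triangle (u := w) (v := m) (w := p)
  have := dist_comm (G := X) (u := m) (v := w')
  simp only [SimpleGraph.IsMedian, mem_interval, mem_side] at hp hwq hwp hw'q hw'p hm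
  rcases hX.mem_side_or_mem_side hpq m with hmp | hmq
  · -- otherwise `d(w, p) ≤ d(w, m) + d(m, p) = d(w, q) - 1`
    simp only [mem_side] at hmp
    omega
  -- then `w`, `w'` and the median `t` of `u, m, p` are three common neighbours of `u` and `m`
  obtain ⟨t, ht⟩ := hX.exists_isMedian u m p
  have := dist_comm (G := X) (u := m) (v := t)
  simp only [SimpleGraph.IsMedian, mem_interval, mem_side] at hmq ht
  have hut : X.Adj u t := dist_eq_one_iff_adj.1 (by omega)
  have hmw : X.Adj m w := dist_eq_one_iff_adj.1 (by rw [dist_comm]; omega)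
  have hmw' : X.Adj m w' := dist_eq_one_iff_adj.1 (by omega)
  have hmt : X.Adj m t := dist_eq_one_iff_adj.1 (by omega)
  have hwt : w ≠ t := by rintro rfl; omega
  have hw't : w' ≠ t := by rintro rfl; omega
  obtain rfl := hX.eq_of_three_common_neighbors huw huw' hut hmw hmw' hmt hne hwt hw't
  rw [dist_self] at *
  omega

lemma finite_adj_mem_interval (u v : V) : {w | X.Adj u w ∧ w ∈ X.interval u v}.Finite := by
  induction hn : X.dist u v generalizing v with
  | zero =>
    refine Set.finite_empty.subset fun w ⟨huw, hw⟩ => ?_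
    simp only [mem_interval, dist_eq_one_iff_adj.2 huw] at hw
    omega
  | succ n ih =>
    have hvu : u ≠ v := by rintro rfl; simp at hn
    obtain ⟨p, hvp, hp, -⟩ := hX.1.exists_adj_of_mem_interval (right_mem_interval v u) hvu
    have hpu : p ∈ X.interval u v := mem_interval_comm.1 hp
    have hdp : X.dist u p = n := by
      have := dist_eq_one_iff_adj.2 hvp.symm
      rw [mem_interval] at hpu
      omega
    refine ((ih p hdp).union
      (hX.subsingleton_adj_mem_interval_mem_side hvp.symm hpu).finite).subset ?_
    rintro w ⟨huw, hw⟩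
    rcases hX.mem_side_or_mem_side hvp.symm w with hwp | hwv
    · refine Or.inl ⟨huw, ?_⟩
      simp only [mem_interval, mem_side, dist_eq_one_iff_adj.2 huw] at hw hwp ⊢
      omega
    · exact Or.inr ⟨huw, hw, hwv⟩

lemma finite_interval (u v : V) : (X.interval u v).Finite := by
  induction hn : X.dist u v using Nat.strong_induction_on generalizing u with
  | _ n ih =>
  refine (((hX.finite_adj_mem_interval u v).biUnion fun w hw => ih _ ?_ w rfl).insert u).subset ?_
  · obtain ⟨huw, hw⟩ := hw
    have := dist_eq_one_iff_adj.2 huw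
    rw [mem_interval] at hw
    omega
  · intro z hz
    obtain rfl | hzu := eq_or_ne z u
    · exact Set.mem_insert z _
    obtain ⟨w, huw, hw, hzw⟩ := hX.1.exists_adj_of_mem_interval hz hzu
    exact Set.mem_insert_of_mem _ (Set.mem_biUnion ⟨huw, hw⟩ hzw)

lemma exists_finite_isConvex_superset {S : Set V} (hS : S.Finite) :
    ∃ D : Set V, D.Finite ∧ IsConvex X D ∧ S ⊆ D := by
  induction S, hS using Set.Finite.induction_on with
  | empty => exact ⟨∅, Set.finite_empty, fun _ h => h.elim, subset_rfl⟩
  | @insert a T _ _ ih =>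
    obtain ⟨D, hDfin, hDconv, hTD⟩ := ih
    obtain rfl | ⟨c, hc⟩ := D.eq_empty_or_nonempty
    · refine ⟨{a}, Set.finite_singleton a, hX.1.isConvex_singleton a, ?_⟩
      exact Set.insert_subset (Set.mem_singleton a) (hTD.trans (Set.empty_subset _))
    refine ⟨⋃ c ∈ D, X.interval a c, hDfin.biUnion fun c _ => hX.finite_interval a c,
      hX.isConvex_biUnion_interval hDconv a, Set.insert_subset ?_ fun t ht => ?_⟩
    · exact Set.mem_biUnion hc (left_mem_interval a c)
    · exact Set.mem_biUnion (hTD ht) (right_mem_interval a t)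

end MedianGraph

/-- In a median graph, the convex hull of a finite set of vertices is finite. -/
theorem convexHull_finite {V : Type*} (X : SimpleGraph V) (hX : MedianGraph X)
    (S : Set V) (hS : S.Finite) :
    (⋂₀ {C : Set V | IsConvex X C ∧ S ⊆ C}).Finite := by
  obtain ⟨D, hDfin, hDconv, hSD⟩ := hX.exists_finite_isConvex_superset hS
  exact hDfin.subset (Set.sInter_subset_of_mem ⟨hDconv, hSD⟩)
end

section
/- Let X be a median graph and let x, y be adjacent vertices. Then the set D = {v : d(v,x) < d(v,y)} is a halfspace of X: it is nonempty, proper, convex, and its complement equals {v : d(v,y) < d(v,x)} and is convex. -/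
open SimpleGraph

/-!
Write `I(a, b)` for the geodesic interval. Every vertex `v` has `x ∈ I(v, y)` or `y ∈ I(v, x)`
(look at the median of `v, x, y`), and not both; so the set in question is
`W = {v | x ∈ I(v, y)}`, with complement `{v | y ∈ I(v, x)}`.

For convexity of `W`, let `u, v ∈ W` and `w ∈ I(u, v)` with `y ∈ I(w, x)`. Put
`p = med(u, w, y)` and `q = med(p, v, y)`. Transitivity of betweenness shows that `q` is a
median of `u, v, y`, and so is `s = med(u, v, x)` because `x ∈ I(u, y) ∩ I(v, y)`. Hence
`q = s`. But `s ∈ W` since `s ∈ I(u, x)`, whereas `q ∈ I(w, y)` forces `y ∈ I(q, x)`.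
-/

namespace SimpleGraph

variable {V : Type*} {G : SimpleGraph V} {a b p q v x y : V}

def Between (G : SimpleGraph V) (a w b : V) : Prop :=
  G.dist a w + G.dist w b = G.dist a b

theorem Between.symm (h : G.Between a q b) : G.Between b q a := by
  unfold Between at *
  rw [dist_comm, add_comm, dist_comm (u := q), h, dist_comm]

theorem Adj.between_iff (hxy : G.Adj x y) : G.Between v x y ↔ G.dist v y = G.dist v x + 1 := by
  rw [Between, dist_eq_one_iff_adj.mpr hxy, eq_comm]

theorem Connected.between_trans (hG : G.Connected) (hq : G.Between a q p)
    (hp : G.Between a p b) : G.Between a q b ∧ G.Between q p b := by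
  unfold Between at *
  have h₁ : G.dist a b ≤ G.dist a q + G.dist q b := hG.dist_triangle
  have h₂ : G.dist q b ≤ G.dist q p + G.dist p b := hG.dist_triangle
  omega

end SimpleGraph

namespace MedianGraph

variable {V : Type*} {X : SimpleGraph V} {x y : V}

theorem exists_median (hX : MedianGraph X) (a b c : V) :
    ∃ m, X.Between a m b ∧ X.Between b m c ∧ X.Between a m c :=
  (hX.2 a b c).exists

theorem median_unique (hX : MedianGraph X) {a b c m m' : V}
    (hm : X.Between a m b ∧ X.Between b m c ∧ X.Between a m c)
    (hm' : X.Between a m' b ∧ X.Between b m' c ∧ X.Between a m' c) : m = m' :=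
  (hX.2 a b c).unique hm hm'

theorem between_or_between_of_adj (hX : MedianGraph X) (hxy : X.Adj x y) (v : V) :
    X.Between v x y ∨ X.Between v y x := by
  obtain ⟨m, hvmx, hxmy, hvmy⟩ := hX.exists_median v x y
  rw [Between, dist_eq_one_iff_adj.mpr hxy] at hxmy
  rcases Nat.add_eq_one_iff.mp hxmy with ⟨hxm, -⟩ | ⟨-, hmy⟩
  · obtain rfl : x = m := hX.1.dist_eq_zero_iff.mp hxm
    exact .inl hvmy
  · obtain rfl : m = y := hX.1.dist_eq_zero_iff.mp hmy
    exact .inr hvmx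

theorem dist_lt_iff_between (hX : MedianGraph X) (hxy : X.Adj x y) (v : V) :
    X.dist v x < X.dist v y ↔ X.Between v x y := by
  rcases hX.between_or_between_of_adj hxy v with h | h <;>
    simp only [hxy.between_iff, hxy.symm.between_iff] at h ⊢ <;> omega

theorem compl_setOf_between (hX : MedianGraph X) (hxy : X.Adj x y) :
    {v | X.Between v x y}ᶜ = {v | X.Between v y x} := by
  ext v
  simp only [Set.mem_compl_iff, Set.mem_ofPred_eq, hxy.between_iff, hxy.symm.between_iff]
  rcases hX.between_or_between_of_adj hxy v with h | h <;>
    simp only [hxy.between_iff, hxy.symm.between_iff] at h <;> omega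

theorem isConvex_setOf_between (hX : MedianGraph X) (hxy : X.Adj x y) :
    IsConvex X {v | X.Between v x y} := by
  intro u hu v hv w huwv
  by_contra hw
  replace hw : X.Between w y x := (hX.between_or_between_of_adj hxy w).resolve_left hw
  have hC := hX.1
  obtain ⟨p, hupy, hypw, hupw⟩ := hX.exists_median u y w
  have hp_uv : X.Between u p v := (hC.between_trans hupw huwv).1
  obtain ⟨q, hpqy, hyqv, hpqv⟩ := hX.exists_median p y v
  have hq_vu : X.Between v q u := (hC.between_trans hpqv.symm hp_uv.symm).1
  have hq_yu : X.Between y q u := (hC.between_trans hpqy.symm hupy.symm).1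
  have hq_yw : X.Between y q w := (hC.between_trans hpqy.symm hypw).1
  obtain ⟨s, husx, hxsv, husv⟩ := hX.exists_median u x v
  obtain ⟨hs_uy, hs⟩ := hC.between_trans husx hu
  have hs_vy : X.Between v s y := (hC.between_trans hxsv.symm hv).1
  have hqs : q = s := hX.median_unique ⟨hq_vu.symm, hyqv.symm, hq_yu.symm⟩ ⟨husv, hs_vy, hs_uy⟩
  have hq : X.Between q y x := (hC.between_trans hq_yw.symm hw).2
  subst hqs
  rw [hxy.between_iff] at hs
  rw [hxy.symm.between_iff] at hq
  omega

end MedianGraph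

/-- In a median graph, the set of vertices strictly closer to `x` than to its
neighbour `y` is a halfspace, with complement the set of vertices strictly closer
to `y`. -/
theorem halfspace_of_adjacent {V : Type*} (X : SimpleGraph V)
    (hX : MedianGraph X) (x y : V) (hxy : X.Adj x y) :
    IsHalfspace X {v : V | X.dist v x < X.dist v y} ∧
      {v : V | X.dist v x < X.dist v y}ᶜ = {v : V | X.dist v y < X.dist v x} := by
  have hW {a b : V} (hab : X.Adj a b) :
      {v | X.dist v a < X.dist v b} = {v | X.Between v a b} :=
    Set.ext (hX.dist_lt_iff_between hab)
  have hcompl : {v | X.dist v x < X.dist v y}ᶜ = {v | X.dist v y < X.dist v x} := by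
    rw [hW hxy, hW hxy.symm, hX.compl_setOf_between hxy]
  refine ⟨⟨⟨x, ?_⟩, fun h => ?_, hW hxy ▸ hX.isConvex_setOf_between hxy, ?_⟩, hcompl⟩
  · simpa [dist_self] using hX.1.pos_dist_of_ne hxy.ne
  · have hy : y ∈ {v | X.dist v x < X.dist v y} := h ▸ Set.mem_univ y
    simp at hy
  · rw [hcompl, hW hxy.symm]
    exact hX.isConvex_setOf_between hxy.symm
end
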